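/- arXiv:2008.02035 — 6 statements merged into one kernel-verified Lean document; each statement's English description precedes it below -/
import Mathlib

section
/- There exists a network with integral arc capacities, two demand scenarios, and a set of fixed arcs such that every integral robust flow (a pair of integral feasible flows agreeing on fixed arcs) has strictly larger maximum scenario cost than some fractional robust flow. Concretely: in a digraph with all capacities 1, the optimal integral robust flow cost can be strictly larger than the optimal fractional robust flow cost. -/
open Finset

/-- A network: digraph with arc set `A`, vertex set `V`, a partition of arcs into
fixed (`isFixed = true`) and free arcs, integral capacities `u` and costs `c`. -/
structure Net (V A : Type) where
  src : A → V
  dst : A → V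
  isFixed : A → Bool
  u : A → ℤ
  c : A → ℤ

variable {V A : Type} [Fintype V] [Fintype A] [DecidableEq V]

/-- Net outflow minus inflow of an integral flow at a vertex. -/
def excess (N : Net V A) (f : A → ℤ) (v : V) : ℤ :=
  ∑ a ∈ univ.filter (fun a => N.src a = v), f a -
    ∑ a ∈ univ.filter (fun a => N.dst a = v), f a

/-- An integral `b`-flow: capacity constraints and flow balance constraints. -/
def IsFlow (N : Net V A) (b : V → ℤ) (f : A → ℤ) : Prop :=
  (∀ a, 0 ≤ f a ∧ f a ≤ N.u a) ∧ ∀ v, excess N f v = b v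

def cost (N : Net V A) (f : A → ℤ) : ℤ := ∑ a, N.c a * f a

/-- An integral robust `b`-flow: a tuple of scenario flows agreeing on fixed arcs. -/
def IsRobust {Λ : Type} (N : Net V A) (b : Λ → V → ℤ) (f : Λ → A → ℤ) : Prop :=
  (∀ lam, IsFlow N (b lam) (f lam)) ∧
    ∀ lam lam' a, N.isFixed a = true → f lam a = f lam' a

/-- Cost of a robust flow: maximum scenario cost. -/
def robustCost {Λ : Type} [Fintype Λ] [Nonempty Λ] (N : Net V A) (f : Λ → A → ℤ) : ℤ :=
  univ.sup' univ_nonempty fun lam => cost N (f lam)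

/-- Fractional (rational-valued) versions. -/
def qexcess (N : Net V A) (f : A → ℚ) (v : V) : ℚ :=
  ∑ a ∈ univ.filter (fun a => N.src a = v), f a -
    ∑ a ∈ univ.filter (fun a => N.dst a = v), f a

def QIsFlow (N : Net V A) (b : V → ℤ) (f : A → ℚ) : Prop :=
  (∀ a, 0 ≤ f a ∧ f a ≤ (N.u a : ℚ)) ∧ ∀ v, qexcess N f v = (b v : ℚ)

def qcost (N : Net V A) (f : A → ℚ) : ℚ := ∑ a, (N.c a : ℚ) * f a

def QIsRobust {Λ : Type} (N : Net V A) (b : Λ → V → ℤ) (f : Λ → A → ℚ) : Prop :=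
  (∀ lam, QIsFlow N (b lam) (f lam)) ∧
    ∀ lam lam' a, N.isFixed a = true → f lam a = f lam' a

def qRobustCost {Λ : Type} [Fintype Λ] [Nonempty Λ] (N : Net V A) (f : Λ → A → ℚ) : ℚ :=
  univ.sup' univ_nonempty fun lam => qcost N (f lam)

/-!
Take two vertices `0, 1`, a fixed arc `0 → 1` of cost `0`, and free arcs `0 → 1` and `1 → 0`
of cost `1`, all of capacity `1`. Scenario `0` must send one unit from `0` to `1`, scenario `1`
demands nothing. The common value `x ∈ {0, 1}` of an integral robust flow on the fixed arc
forces cost `1` in one scenario: for `x = 0` the unit of scenario `0` uses the free arc `0 → 1`,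
for `x = 1` scenario `1` must return it along `1 → 0`. With `x = 1/2` both scenarios pay
only `1/2`.
-/

section RobustCost

variable {V A Λ : Type} [Fintype A] [Fintype Λ] [Nonempty Λ]

theorem cost_le_robustCost (N : Net V A) (f : Λ → A → ℤ) (lam : Λ) :
    cost N (f lam) ≤ robustCost N f :=
  le_sup' (fun lam => cost N (f lam)) (mem_univ lam)

theorem qRobustCost_le {N : Net V A} {g : Λ → A → ℚ} {B : ℚ} (h : ∀ lam, qcost N (g lam) ≤ B) :
    qRobustCost N g ≤ B :=
  sup'_le _ _ fun lam _ => h lam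

end RobustCost

def gapNet : Net (Fin 2) (Fin 3) where
  src := ![0, 0, 1]
  dst := ![1, 1, 0]
  isFixed := ![true, false, false]
  u := fun _ => 1
  c := ![0, 1, 1]

def gapDemand : Fin 2 → Fin 2 → ℤ := ![![1, -1], ![0, 0]]

def gapIntFlow : Fin 2 → Fin 3 → ℤ := ![![1, 0, 0], ![1, 0, 1]]

def gapFracFlow : Fin 2 → Fin 3 → ℚ := ![![1/2, 1/2, 0], ![1/2, 0, 1/2]]

theorem gapDemand_sum (lam : Fin 2) : ∑ v, gapDemand lam v = 0 := by
  fin_cases lam <;> simp [gapDemand]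

theorem excess_gapNet (f : Fin 3 → ℤ) :
    excess gapNet f 0 = f 0 + f 1 - f 2 ∧ excess gapNet f 1 = f 2 - f 0 - f 1 := by
  simp only [excess, sum_filter, Fin.sum_univ_three]
  simp [gapNet]
  omega

theorem qexcess_gapNet (f : Fin 3 → ℚ) :
    qexcess gapNet f 0 = f 0 + f 1 - f 2 ∧ qexcess gapNet f 1 = f 2 - f 0 - f 1 := by
  simp only [qexcess, sum_filter, Fin.sum_univ_three]
  refine ⟨?_, ?_⟩ <;> simp [gapNet]; ring

theorem gapIntFlow_isRobust : IsRobust gapNet gapDemand gapIntFlow := by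
  refine ⟨fun lam => ⟨fun a => ?_, fun v => ?_⟩, fun lam lam' a ha => ?_⟩
  · fin_cases lam <;> fin_cases a <;> simp [gapIntFlow, gapNet]
  · fin_cases lam <;> fin_cases v <;> simp [excess_gapNet, gapIntFlow, gapDemand]
  · fin_cases a <;> simp_all [gapNet]
    fin_cases lam <;> fin_cases lam' <;> rfl

theorem gapFracFlow_isRobust : QIsRobust gapNet gapDemand gapFracFlow := by
  refine ⟨fun lam => ⟨fun a => ?_, fun v => ?_⟩, fun lam lam' a ha => ?_⟩
  · fin_cases lam <;> fin_cases a <;> norm_num [gapFracFlow, gapNet]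
  · fin_cases lam <;> fin_cases v <;> simp [qexcess_gapNet, gapFracFlow, gapDemand] <;> norm_num
  · fin_cases a <;> simp_all [gapNet]
    fin_cases lam <;> fin_cases lam' <;> rfl

theorem qRobustCost_gapFracFlow_le : qRobustCost gapNet gapFracFlow ≤ 1 / 2 :=
  qRobustCost_le fun lam => by
    fin_cases lam <;> simp [qcost, gapNet, gapFracFlow, Fin.sum_univ_three]

theorem one_le_robustCost_gapNet {f : Fin 2 → Fin 3 → ℤ} (hf : IsRobust gapNet gapDemand f) :
    1 ≤ robustCost gapNet f := by
  obtain ⟨hflow, hfixed⟩ := hf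
  have hnonneg (lam : Fin 2) (a : Fin 3) : 0 ≤ f lam a := ((hflow lam).1 a).1
  have hx_le : f 0 0 ≤ 1 := ((hflow 0).1 0).2
  have hx : f 0 0 = f 1 0 := hfixed 0 1 0 rfl
  have hbal₀ : f 0 0 + f 0 1 - f 0 2 = 1 := (excess_gapNet (f 0)).1 ▸ (hflow 0).2 0
  have hbal₁ : f 1 0 + f 1 1 - f 1 2 = 0 := (excess_gapNet (f 1)).1 ▸ (hflow 1).2 0
  have hcost (lam : Fin 2) : cost gapNet (f lam) = f lam 1 + f lam 2 := by
    simp [cost, gapNet, Fin.sum_univ_three]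
  have hx_cases : f 0 0 = 0 ∨ f 0 0 = 1 := by have := hnonneg 0 0; omega
  rcases hx_cases with hx₀ | hx₁
  · calc 1 ≤ f 0 1 + f 0 2 := by linarith [hnonneg 0 2]
      _ = cost gapNet (f 0) := (hcost 0).symm
      _ ≤ robustCost gapNet f := cost_le_robustCost gapNet f 0
  · calc 1 ≤ f 1 1 + f 1 2 := by linarith [hnonneg 1 1]
      _ = cost gapNet (f 1) := (hcost 1).symm
      _ ≤ robustCost gapNet f := cost_le_robustCost gapNet f 1

/-- There is a network with all capacities equal to `1`, nonnegative
costs, and two demand scenarios, in which some fractional robust flow has strictly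
smaller (maximum scenario) cost than every integral robust flow; in particular the
optimal integral robust flow cost is strictly larger than the optimal fractional one. -/
theorem integrality_gap_exists :
    ∃ (nV nA : ℕ) (N : Net (Fin nV) (Fin nA)) (b : Fin 2 → Fin nV → ℤ),
      (∀ a, N.u a = 1) ∧
      (∀ a, 0 ≤ N.c a) ∧
      (∀ lam, ∑ v, b lam v = 0) ∧
      (∃ f : Fin 2 → Fin nA → ℤ, IsRobust N b f) ∧
      (∃ g : Fin 2 → Fin nA → ℚ,
        QIsRobust N b g ∧
        ∀ f : Fin 2 → Fin nA → ℤ, IsRobust N b f →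
          qRobustCost N g < (robustCost N f : ℚ)) := by
  refine ⟨2, 3, gapNet, gapDemand, fun _ => rfl, fun a => ?_, gapDemand_sum,
    ⟨gapIntFlow, gapIntFlow_isRobust⟩, gapFracFlow, gapFracFlow_isRobust, fun f hf => ?_⟩
  · fin_cases a <;> simp [gapNet]
  · have h : (1 : ℚ) ≤ robustCost gapNet f := mod_cast one_le_robustCost_gapNet hf
    linarith [qRobustCost_gapFracFlow_le]
end

section
/- Consider a robust minimum cost flow instance with a unique source s and a unique sink t, scenarios strictly ordered by supply b^1(s) < b^2(s) < ... < b^{|Lambda|}(s), and suppose integral feasible flows f^1 and f^{|Lambda|} for the first and last scenario are given that agree on all fixed arcs. Then there exists a (possibly fractional) robust b-flow f = (f^1, ..., f^{|Lambda|}) whose cost equals max{c(f^1), c(f^{|Lambda|})}; in particular, for every intermediate scenario lambda, the convex combination gamma^lambda f^1 + (1-gamma^lambda) f^{|Lambda|}, with gamma^lambda chosen so that b^lambda(s) = gamma^lambda b^1(s) + (1-gamma^lambda) b^{|Lambda|}(s), is a feasible b^lambda-flow agreeing with f^1 on all fixed arcs and has cost at most max{c(f^1), c(f^{|Lambda|})}.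 -/
open Finset

variable {V A : Type} [Fintype V] [Fintype A] [DecidableEq V]

/-!
The last two supplies bracket every intermediate one, so `b^λ(s)` is a convex combination
`γ b^1(s) + (1 - γ) b^L(s)`. With a single source and a single sink the whole supply vector is
determined by `b(s)`, hence the same combination of `f^1` and `f^L` has excess `b^λ`. Capacities,
agreement on fixed arcs and the cost bound are all preserved by convex combinations.
-/

section Weight

variable {K : Type*} [Field K]

def convexWeight (x₀ x₁ x : K) : K := (x₁ - x) / (x₁ - x₀)

theorem convexWeight_combination {x₀ x₁ : K} (h : x₀ ≠ x₁) (x : K) :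
    convexWeight x₀ x₁ x * x₀ + (1 - convexWeight x₀ x₁ x) * x₁ = x := by
  have : x₁ - x₀ ≠ 0 := sub_ne_zero.2 h.symm
  unfold convexWeight
  field_simp
  ring

theorem convexWeight_left {x₀ x₁ : K} (h : x₀ ≠ x₁) : convexWeight x₀ x₁ x₀ = 1 :=
  div_self (sub_ne_zero.2 h.symm)

theorem convexWeight_right (x₀ x₁ : K) : convexWeight x₀ x₁ x₁ = 0 := by
  simp [convexWeight]

variable [LinearOrder K] [IsStrictOrderedRing K]

theorem convexWeight_nonneg {x₀ x₁ x : K} (h₀₁ : x₀ ≤ x₁) (hx : x ≤ x₁) :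
    0 ≤ convexWeight x₀ x₁ x :=
  div_nonneg (sub_nonneg.2 hx) (sub_nonneg.2 h₀₁)

theorem convexWeight_le_one {x₀ x₁ x : K} (h₀₁ : x₀ < x₁) (hx : x₀ ≤ x) :
    convexWeight x₀ x₁ x ≤ 1 :=
  (div_le_one (sub_pos.2 h₀₁)).2 (by linarith)

end Weight

theorem qexcess_intCast {V A : Type} [Fintype A] [DecidableEq V] (N : Net V A) (f : A → ℤ)
    (v : V) :
    qexcess N (fun a => (f a : ℚ)) v = excess N f v := by
  simp only [qexcess, excess]
  push_cast
  rfl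

theorem qcost_intCast {V A : Type} [Fintype A] (N : Net V A) (f : A → ℤ) :
    qcost N (fun a => (f a : ℚ)) = cost N f := by
  simp only [qcost, cost]
  push_cast
  rfl

theorem qexcess_linearCombination {V A : Type} [Fintype A] [DecidableEq V] (N : Net V A)
    (p q : ℚ) (f g : A → ℚ) (v : V) :
    qexcess N (fun a => p * f a + q * g a) v = p * qexcess N f v + q * qexcess N g v := by
  simp only [qexcess, sum_add_distrib, ← mul_sum]
  ring

theorem qcost_linearCombination {V A : Type} [Fintype A] (N : Net V A) (p q : ℚ) (f g : A → ℚ) :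
    qcost N (fun a => p * f a + q * g a) = p * qcost N f + q * qcost N g := by
  simp only [qcost, mul_add, sum_add_distrib, mul_sum]
  congr 1 <;> exact sum_congr rfl fun a _ => by ring

theorem QIsFlow.convexCombination {V A : Type} [Fintype A] [DecidableEq V] {N : Net V A}
    {b₀ b₁ b : V → ℤ} {f₀ f₁ : A → ℤ} {γ : ℚ}
    (hf₀ : IsFlow N b₀ f₀) (hf₁ : IsFlow N b₁ f₁) (hγ₀ : 0 ≤ γ) (hγ₁ : γ ≤ 1)
    (hb : ∀ v, γ * b₀ v + (1 - γ) * b₁ v = b v) :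
    QIsFlow N b (fun a => γ * f₀ a + (1 - γ) * f₁ a) := by
  have hγ : 0 ≤ 1 - γ := sub_nonneg.2 hγ₁
  refine ⟨fun a => ⟨?_, ?_⟩, fun v => ?_⟩
  · have h₀ : (0 : ℚ) ≤ f₀ a := by exact_mod_cast (hf₀.1 a).1
    have h₁ : (0 : ℚ) ≤ f₁ a := by exact_mod_cast (hf₁.1 a).1
    exact (le_min h₀ h₁).trans (Convex.min_le_combo _ _ hγ₀ hγ (by ring))
  · have h₀ : (f₀ a : ℚ) ≤ N.u a := by exact_mod_cast (hf₀.1 a).2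
    have h₁ : (f₁ a : ℚ) ≤ N.u a := by exact_mod_cast (hf₁.1 a).2
    exact (Convex.combo_le_max _ _ hγ₀ hγ (by ring)).trans (max_le h₀ h₁)
  · rw [qexcess_linearCombination, qexcess_intCast, qexcess_intCast, hf₀.2, hf₁.2, hb]

theorem qcost_convexCombination_le_max {V A : Type} [Fintype A] {N : Net V A} {f₀ f₁ : A → ℤ}
    {γ : ℚ} (hγ₀ : 0 ≤ γ) (hγ₁ : γ ≤ 1) :
    qcost N (fun a => γ * f₀ a + (1 - γ) * f₁ a) ≤ max (cost N f₀ : ℚ) (cost N f₁) := by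
  rw [qcost_linearCombination, qcost_intCast, qcost_intCast]
  exact Convex.combo_le_max _ _ hγ₀ (sub_nonneg.2 hγ₁) (by ring)

theorem supply_combination_of_source {α ι : Type*} {b : ι → α → ℤ} {s t : α}
    (hinterior : ∀ i v, v ≠ s → v ≠ t → b i v = 0) (hsink : ∀ i, b i t = -b i s)
    {i₀ i₁ i : ι} {γ : ℚ} (hs : γ * b i₀ s + (1 - γ) * b i₁ s = b i s) (v : α) :
    γ * b i₀ v + (1 - γ) * b i₁ v = b i v := by
  by_cases hvs : v = s
  · rwa [hvs]
  by_cases hvt : v = t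
  · simp only [hvt, hsink, Int.cast_neg]
    linear_combination -hs
  · simp [hinterior _ v hvs hvt]

/-- Lemma 2 of the paper: in a unique-source unique-sink instance with
scenarios strictly ordered by supply, given integral feasible flows `f1`, `fL` for the
first and last scenario agreeing on all fixed arcs, there is a (possibly fractional)
robust `b`-flow whose first and last scenario flows are `f1` and `fL`, whose every
intermediate scenario flow is the convex combination `γ^λ f1 + (1-γ^λ) fL` (with
`γ^λ` matching the supplies), and whose cost is `max {c(f1), c(fL)}`. -/
theorem convex_combination_robust_flow
    (L : ℕ) (hL : 2 ≤ L)
    (N : Net V A) (b : Fin L → V → ℤ) (s t : V)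
    (hinterior : ∀ (lam : Fin L) (v : V), v ≠ s → v ≠ t → b lam v = 0)
    (hsink : ∀ lam : Fin L, b lam t = - b lam s)
    (hord : StrictMono fun lam : Fin L => b lam s)
    (f1 fL : A → ℤ)
    (hf1 : IsFlow N (b ⟨0, by omega⟩) f1)
    (hfL : IsFlow N (b ⟨L - 1, by omega⟩) fL)
    (hagree : ∀ a, N.isFixed a = true → f1 a = fL a) :
    ∃ g : Fin L → A → ℚ,
      (∀ lam, QIsFlow N (b lam) (g lam)) ∧
      (∀ lam lam' a, N.isFixed a = true → g lam a = g lam' a) ∧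
      (g ⟨0, by omega⟩ = fun a => (f1 a : ℚ)) ∧
      (g ⟨L - 1, by omega⟩ = fun a => (fL a : ℚ)) ∧
      (∀ lam : Fin L, ∃ γ : ℚ, 0 ≤ γ ∧ γ ≤ 1 ∧
        γ * (b ⟨0, by omega⟩ s : ℚ) + (1 - γ) * (b ⟨L - 1, by omega⟩ s : ℚ)
          = (b lam s : ℚ) ∧
        ∀ a, g lam a = γ * (f1 a : ℚ) + (1 - γ) * (fL a : ℚ)) ∧
      (∀ lam, qcost N (g lam) ≤ max (cost N f1 : ℚ) (cost N fL : ℚ)) := by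
  set i₀ : Fin L := ⟨0, by omega⟩
  set i₁ : Fin L := ⟨L - 1, by omega⟩
  have hfirst (lam : Fin L) : (b i₀ s : ℚ) ≤ b lam s := by
    exact_mod_cast hord.monotone (Fin.mk_le_mk.2 (Nat.zero_le lam))
  have hlast (lam : Fin L) : (b lam s : ℚ) ≤ b i₁ s := by
    exact_mod_cast hord.monotone (Fin.le_def.2 (Nat.le_sub_one_of_lt lam.isLt))
  have hlt : (b i₀ s : ℚ) < b i₁ s := by exact_mod_cast hord (Fin.mk_lt_mk.2 (by omega))
  set γ : Fin L → ℚ := fun lam => convexWeight (b i₀ s : ℚ) (b i₁ s) (b lam s)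
  have hγ₀ (lam : Fin L) : 0 ≤ γ lam := convexWeight_nonneg hlt.le (hlast lam)
  have hγ₁ (lam : Fin L) : γ lam ≤ 1 := convexWeight_le_one hlt (hfirst lam)
  have hcomb (lam : Fin L) : γ lam * b i₀ s + (1 - γ lam) * b i₁ s = b lam s :=
    convexWeight_combination hlt.ne _
  refine ⟨fun lam a => γ lam * f1 a + (1 - γ lam) * fL a,
    fun lam => QIsFlow.convexCombination hf1 hfL (hγ₀ lam) (hγ₁ lam)
      (supply_combination_of_source hinterior hsink (hcomb lam)),
    fun lam lam' a ha => by simp only [hagree a ha]; ring, ?_, ?_,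
    fun lam => ⟨γ lam, hγ₀ lam, hγ₁ lam, hcomb lam, fun a => rfl⟩,
    fun lam => qcost_convexCombination_le_max (hγ₀ lam) (hγ₁ lam)⟩
  · funext a
    simp [γ, convexWeight_left hlt.ne]
  · funext a
    simp [γ, convexWeight_right]
end

section
/- Parallel composition recurrence: Let the series-parallel digraph G_v be the parallel composition of G_x and G_y (origins and targets identified). The restricted robust flow problem on G_v with supply vector s~_v and budget vector c~_v is feasible if and only if there exist supply vectors s~_x, s~_y and budget vectors c~_x, c~_y with s~_v = s~_x + s~_y (componentwise) and c~_v = c~_x + c~_y such that the restricted problems on G_x with (s~_x, c~_x) and on G_y with (s~_y, c~_y) are both feasible. Equivalently, d_v(s~_v, c~_v) = min over all such splittings of d_x(s~_x, c~_x) + d_y(s~_y, c~_y). -/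
open Finset

variable {V A : Type} [Fintype V] [Fintype A] [DecidableEq V]

/-- A vertex is incident to the (sub)graph if some arc starts or ends there. -/
def Incident (N : Net V A) (v : V) : Prop := ∃ a, N.src a = v ∨ N.dst a = v

instance (N : Net V A) (v : V) : Decidable (Incident N v) :=
  inferInstanceAs (Decidable (∃ a, N.src a = v ∨ N.dst a = v))

/-- The `(st, ct)`-restricted robust minimum cost flow problem on a subgraph with
origin `o` and target `q` is feasible (demand label `0`): there are integral scenario
flows within capacities, agreeing on fixed arcs, with excess `st^λ` at the origin and
excess `b^λ(w)` at every other vertex of the subgraph except the target, whose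
scenario costs exactly meet the budgets `ct^λ`. -/
def RestFeasible {Λ : Type} (N : Net V A) (o q : V) (b : Λ → V → ℤ)
    (st ct : Λ → ℤ) : Prop :=
  ∃ f : Λ → A → ℤ,
    (∀ lam a, 0 ≤ f lam a ∧ f lam a ≤ N.u a) ∧
    (∀ lam lam' a, N.isFixed a = true → f lam a = f lam' a) ∧
    (∀ lam, excess N (f lam) o = st lam) ∧
    (∀ lam v, v ≠ o → v ≠ q → Incident N v → excess N (f lam) v = b lam v) ∧
    (∀ lam, cost N (f lam) = ct lam)

/-- The combined network on the disjoint union of the arc sets of two subgraphs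
sharing the vertex type `V` (used for series and parallel compositions). -/
def combineNet {Ax Ay : Type} (Nx : Net V Ax) (Ny : Net V Ay) : Net V (Ax ⊕ Ay) where
  src := Sum.elim Nx.src Ny.src
  dst := Sum.elim Nx.dst Ny.dst
  isFixed := Sum.elim Nx.isFixed Ny.isFixed
  u := Sum.elim Nx.u Ny.u
  c := Sum.elim Nx.c Ny.c

/-! Scenario flows on the parallel composition are exactly pairs of scenario flows on the
two components: excesses and costs add over the two arc sets, at the shared origin this
splits the supply and the budget, and every interior vertex lies in only one component,
where the other contributes excess `0`. -/

section

omit [Fintype V]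

theorem sum_filter_sumElim_eq {Ax Ay M : Type} [Fintype Ax] [Fintype Ay] [AddCommMonoid M]
    (p : Ax → V) (r : Ay → V) (f : Ax ⊕ Ay → M) (v : V) :
    ∑ a ∈ univ.filter (fun a => Sum.elim p r a = v), f a =
      ∑ a ∈ univ.filter (fun a => p a = v), f (.inl a) +
        ∑ a ∈ univ.filter (fun a => r a = v), f (.inr a) := by
  simp only [sum_filter, Fintype.sum_sum_type, Sum.elim_inl, Sum.elim_inr]
  rfl

structure IsRestFlow {Λ : Type} (N : Net V A) (o q : V) (b : Λ → V → ℤ)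
    (st ct : Λ → ℤ) (f : Λ → A → ℤ) : Prop where
  bounds : ∀ lam a, 0 ≤ f lam a ∧ f lam a ≤ N.u a
  fixed : ∀ lam lam' a, N.isFixed a = true → f lam a = f lam' a
  excess_origin : ∀ lam, excess N (f lam) o = st lam
  excess_interior : ∀ lam v, v ≠ o → v ≠ q → Incident N v → excess N (f lam) v = b lam v
  cost_eq : ∀ lam, cost N (f lam) = ct lam

theorem restFeasible_iff {Λ : Type} (N : Net V A) (o q : V) (b : Λ → V → ℤ)
    (st ct : Λ → ℤ) :
    RestFeasible N o q b st ct ↔ ∃ f, IsRestFlow N o q b st ct f :=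
  exists_congr fun _ =>
    ⟨fun ⟨h₁, h₂, h₃, h₄, h₅⟩ => ⟨h₁, h₂, h₃, h₄, h₅⟩,
      fun h => ⟨h.bounds, h.fixed, h.excess_origin, h.excess_interior, h.cost_eq⟩⟩

theorem excess_eq_zero_of_not_incident (N : Net V A) (f : A → ℤ) {v : V}
    (hv : ¬Incident N v) : excess N f v = 0 := by
  have hsrc : univ.filter (fun a => N.src a = v) = ∅ :=
    filter_eq_empty_iff.mpr fun a _ ha => hv ⟨a, .inl ha⟩
  have hdst : univ.filter (fun a => N.dst a = v) = ∅ :=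
    filter_eq_empty_iff.mpr fun a _ ha => hv ⟨a, .inr ha⟩
  simp [excess, hsrc, hdst]

section combineNet

variable {Ax Ay : Type} (Nx : Net V Ax) (Ny : Net V Ay)

omit [DecidableEq V] in
theorem incident_combineNet_iff (v : V) :
    Incident (combineNet Nx Ny) v ↔ Incident Nx v ∨ Incident Ny v := by
  simp only [Incident, combineNet, Sum.exists, Sum.elim_inl, Sum.elim_inr]

variable [Fintype Ax] [Fintype Ay]

theorem excess_combineNet (f : Ax ⊕ Ay → ℤ) (v : V) :
    excess (combineNet Nx Ny) f v =
      excess Nx (f ∘ Sum.inl) v + excess Ny (f ∘ Sum.inr) v := by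
  rw [excess, excess, excess, combineNet, sum_filter_sumElim_eq, sum_filter_sumElim_eq]
  dsimp only [Function.comp_apply]
  ring

omit [DecidableEq V] in
theorem cost_combineNet (f : Ax ⊕ Ay → ℤ) :
    cost (combineNet Nx Ny) f = cost Nx (f ∘ Sum.inl) + cost Ny (f ∘ Sum.inr) := by
  simp only [cost, combineNet, Fintype.sum_sum_type, Sum.elim_inl, Sum.elim_inr,
    Function.comp_apply]

variable {Nx Ny} {Λ : Type} {o q : V} {b : Λ → V → ℤ}

theorem IsRestFlow.comp_inl
    (hdisj : ∀ v, v ≠ o → v ≠ q → ¬(Incident Nx v ∧ Incident Ny v))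
    {st ct : Λ → ℤ} {f : Λ → Ax ⊕ Ay → ℤ} (hf : IsRestFlow (combineNet Nx Ny) o q b st ct f) :
    IsRestFlow Nx o q b (fun lam => excess Nx (f lam ∘ Sum.inl) o)
      (fun lam => cost Nx (f lam ∘ Sum.inl)) (fun lam => f lam ∘ Sum.inl) where
  bounds lam a := hf.bounds lam (.inl a)
  fixed lam lam' a := hf.fixed lam lam' (.inl a)
  excess_origin _ := rfl
  excess_interior lam v hvo hvq hv := by
    have hy : ¬Incident Ny v := fun hy => hdisj v hvo hvq ⟨hv, hy⟩
    rw [← hf.excess_interior lam v hvo hvq ((incident_combineNet_iff Nx Ny v).2 (.inl hv)),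
      excess_combineNet, excess_eq_zero_of_not_incident Ny _ hy, add_zero]
  cost_eq _ := rfl

theorem IsRestFlow.comp_inr
    (hdisj : ∀ v, v ≠ o → v ≠ q → ¬(Incident Nx v ∧ Incident Ny v))
    {st ct : Λ → ℤ} {f : Λ → Ax ⊕ Ay → ℤ} (hf : IsRestFlow (combineNet Nx Ny) o q b st ct f) :
    IsRestFlow Ny o q b (fun lam => excess Ny (f lam ∘ Sum.inr) o)
      (fun lam => cost Ny (f lam ∘ Sum.inr)) (fun lam => f lam ∘ Sum.inr) where
  bounds lam a := hf.bounds lam (.inr a)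
  fixed lam lam' a := hf.fixed lam lam' (.inr a)
  excess_origin _ := rfl
  excess_interior lam v hvo hvq hv := by
    have hx : ¬Incident Nx v := fun hx => hdisj v hvo hvq ⟨hx, hv⟩
    rw [← hf.excess_interior lam v hvo hvq ((incident_combineNet_iff Nx Ny v).2 (.inr hv)),
      excess_combineNet, excess_eq_zero_of_not_incident Nx _ hx, zero_add]
  cost_eq _ := rfl

theorem IsRestFlow.sumElim
    (hdisj : ∀ v, v ≠ o → v ≠ q → ¬(Incident Nx v ∧ Incident Ny v))
    {sx sy cx cy : Λ → ℤ} {fx : Λ → Ax → ℤ} {fy : Λ → Ay → ℤ}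
    (hx : IsRestFlow Nx o q b sx cx fx) (hy : IsRestFlow Ny o q b sy cy fy) :
    IsRestFlow (combineNet Nx Ny) o q b (sx + sy) (cx + cy)
      (fun lam => Sum.elim (fx lam) (fy lam)) where
  bounds lam := Sum.rec (hx.bounds lam) (hy.bounds lam)
  fixed lam lam' := Sum.rec (hx.fixed lam lam') (hy.fixed lam lam')
  excess_origin lam := by
    rw [excess_combineNet, Sum.elim_comp_inl, Sum.elim_comp_inr, hx.excess_origin,
      hy.excess_origin, Pi.add_apply]
  excess_interior lam v hvo hvq hv := by
    rw [excess_combineNet, Sum.elim_comp_inl, Sum.elim_comp_inr]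
    rcases (incident_combineNet_iff Nx Ny v).1 hv with hvx | hvy
    · have hvy : ¬Incident Ny v := fun hvy => hdisj v hvo hvq ⟨hvx, hvy⟩
      rw [hx.excess_interior lam v hvo hvq hvx, excess_eq_zero_of_not_incident Ny _ hvy,
        add_zero]
    · have hvx : ¬Incident Nx v := fun hvx => hdisj v hvo hvq ⟨hvx, hvy⟩
      rw [hy.excess_interior lam v hvo hvq hvy, excess_eq_zero_of_not_incident Nx _ hvx,
        zero_add]
  cost_eq lam := by
    rw [cost_combineNet, Sum.elim_comp_inl, Sum.elim_comp_inr, hx.cost_eq, hy.cost_eq,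
      Pi.add_apply]

end combineNet
end

theorem dp_parallel_recurrence_general {Ax Ay Λ : Type} [Fintype Ax] [Fintype Ay]
    (Nx : Net V Ax) (Ny : Net V Ay) (o q : V)
    (hdisj : ∀ v, v ≠ o → v ≠ q → ¬(Incident Nx v ∧ Incident Ny v))
    (b : Λ → V → ℤ) (st ct : Λ → ℤ) :
    RestFeasible (combineNet Nx Ny) o q b st ct ↔
      ∃ sx sy cx cy : Λ → ℤ,
        (∀ lam, st lam = sx lam + sy lam) ∧
        (∀ lam, ct lam = cx lam + cy lam) ∧
        RestFeasible Nx o q b sx cx ∧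
        RestFeasible Ny o q b sy cy := by
  simp only [restFeasible_iff]
  constructor
  · rintro ⟨f, hf⟩
    refine ⟨_, _, _, _, fun lam => ?_, fun lam => ?_, ⟨_, hf.comp_inl hdisj⟩,
      ⟨_, hf.comp_inr hdisj⟩⟩
    · rw [← hf.excess_origin, excess_combineNet]
    · rw [← hf.cost_eq, cost_combineNet]
  · rintro ⟨sx, sy, cx, cy, hs, hc, ⟨fx, hx⟩, ⟨fy, hy⟩⟩
    obtain rfl : st = sx + sy := funext hs
    obtain rfl : ct = cx + cy := funext hc
    exact ⟨_, hx.sumElim hdisj hy⟩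

/-- Lemma 5 of the paper, parallel composition recurrence: if `G_v` is
the parallel composition of `G_x` and `G_y` (same origin `o` and target `q`, interior
vertices disjoint), then the restricted problem on `G_v` with supplies `st` and
budgets `ct` is feasible iff these can be split as `st = sx + sy`, `ct = cx + cy` with
both restricted subproblems feasible. -/
theorem dp_parallel_recurrence {Ax Ay Λ : Type} [Fintype Ax] [Fintype Ay]
    (Nx : Net V Ax) (Ny : Net V Ay) (o q : V) (hoq : o ≠ q)
    (hdisj : ∀ v, v ≠ o → v ≠ q → ¬(Incident Nx v ∧ Incident Ny v))
    (b : Λ → V → ℤ) (st ct : Λ → ℤ) :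
    RestFeasible (combineNet Nx Ny) o q b st ct ↔
      ∃ sx sy cx cy : Λ → ℤ,
        (∀ lam, st lam = sx lam + sy lam) ∧
        (∀ lam, ct lam = cx lam + cy lam) ∧
        RestFeasible Nx o q b sx cx ∧
        RestFeasible Ny o q b sy cy :=
  dp_parallel_recurrence_general Nx Ny o q hdisj b st ct
end

section
/- Correctness of the DP at the root: For an SP digraph G with origin o and target q, and root r of its SP tree (so G_r = G), the minimum cost of an integral robust b-flow equals the minimum over all budget vectors c~ in {0,...,C}^{|Lambda|} of max_lambda c~^lambda subject to the restricted problem on G with supply (b^1(o),...,b^{|Lambda|}(o)) and budget c~ being feasible, where C = sum_{a in A(G)} c(a) u(a). In particular, a robust b-flow of cost k exists if and only if some feasible budget vector c~ with max_lambda c~^lambda = k exists. -/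
open Finset

variable {V A : Type} [Fintype V] [Fintype A] [DecidableEq V]

lemma sum_excess_zero (N : Net V A) (f : A → ℤ) : ∑ v, excess N f v = 0 := by
  unfold excess
  rw [Finset.sum_sub_distrib,
    Finset.sum_fiberwise_of_maps_to (fun a _ => Finset.mem_univ (N.src a)) f,
    Finset.sum_fiberwise_of_maps_to (fun a _ => Finset.mem_univ (N.dst a)) f,
    sub_self]

/-- Lemma 7 of the paper, correctness of the DP at the root: for the
whole SP digraph `G = G_r` with origin `o` and target `q` (every other vertex being
incident to some arc), nonnegative capacities and costs, and balances summing to zero,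
a robust `b`-flow of cost `k` exists iff there is a budget vector `ct` with entries in
`{0,…,C}` (where `C = Σ_a c(a)·u(a)`), maximum entry `k`, for which the restricted
problem with supplies `(b^λ(o))_λ` is feasible.  In particular, the minimum robust
flow cost is the minimum over feasible budget vectors of `max_λ ct^λ`. -/
theorem dp_root_correct {Λ : Type} [Fintype Λ] [Nonempty Λ]
    (N : Net V A) (o q : V) (hoq : o ≠ q)
    (b : Λ → V → ℤ) (hb : ∀ lam, ∑ v, b lam v = 0)
    (hu : ∀ a, 0 ≤ N.u a) (hc : ∀ a, 0 ≤ N.c a)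
    (hinc : ∀ v, v ≠ o → v ≠ q → Incident N v)
    (C : ℤ) (hC : C = ∑ a, N.c a * N.u a) (k : ℤ) :
    (∃ f : Λ → A → ℤ, IsRobust N b f ∧ robustCost N f = k) ↔
    (∃ ct : Λ → ℤ,
      (∀ lam, 0 ≤ ct lam ∧ ct lam ≤ C) ∧
      (univ.sup' univ_nonempty fun lam => ct lam) = k ∧
      RestFeasible N o q b (fun lam => b lam o) ct) := by
  constructor
  · rintro ⟨f, ⟨hflow, hfix⟩, hcost⟩
    refine ⟨fun lam => cost N (f lam), fun lam => ?_, ?_, f, fun lam a => (hflow lam).1 a,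
      hfix, fun lam => (hflow lam).2 o, fun lam v _ _ _ => (hflow lam).2 v, fun lam => rfl⟩
    · constructor
      · exact Finset.sum_nonneg fun a _ =>
          mul_nonneg (hc a) ((hflow lam).1 a).1
      · rw [hC]
        exact Finset.sum_le_sum fun a _ =>
          mul_le_mul_of_nonneg_left ((hflow lam).1 a).2 (hc a)
    · exact hcost
  · rintro ⟨ct, hct, hsup, f, hcap, hfix, ho, hv, hcost⟩
    refine ⟨f, ⟨fun lam => ⟨hcap lam, fun v => ?_⟩, hfix⟩, ?_⟩
    · by_cases hvq : v = q
      · rw [hvq]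
        have h1 := sum_excess_zero N (f lam)
        have h2 := hb lam
        rw [← Finset.add_sum_erase _ _ (Finset.mem_univ q)] at h1 h2
        have heq : ∑ v ∈ univ.erase q, excess N (f lam) v
            = ∑ v ∈ univ.erase q, b lam v := by
          refine Finset.sum_congr rfl fun v hvmem => ?_
          have hvq' : v ≠ q := Finset.ne_of_mem_erase hvmem
          by_cases hvo : v = o
          · subst hvo; exact ho lam
          · exact hv lam v hvo hvq' (hinc v hvo hvq')
        omega
      · by_cases hvo : v = o
        · subst hvo; exact ho lam
        · exact hv lam v hvo hvq (hinc v hvo hvq)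
    · rw [← hsup]
      unfold robustCost
      exact Finset.sup'_congr _ rfl (fun lam _ => hcost lam)
end

section
/- For a two-scenario robust flow instance on a series-parallel digraph with unique source at the origin and unique sink at the target, with demands d^1 <= d^2, there exists an optimal integral robust b-flow f = (f^1, f^2) such that f^2(a) >= f^1(a) for every arc a of the digraph. -/
open Finset

/-- Syntax trees of series-parallel digraphs: a single arc (with a flag marking it as
a fixed arc, a capacity and a cost), or a series or parallel composition. -/
inductive SPD : Type where
  | arc (isFixed : Bool) (u c : ℤ) : SPD
  | series (g₁ g₂ : SPD) : SPD
  | parallel (g₁ g₂ : SPD) : SPD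

namespace SPD

/-- Interior vertices (all vertices except origin and target). -/
def Inner : SPD → Type
  | arc _ _ _ => Empty
  | series g₁ g₂ => (g₁.Inner ⊕ g₂.Inner) ⊕ Unit
  | parallel g₁ g₂ => g₁.Inner ⊕ g₂.Inner

/-- Vertices: interior vertices plus the origin (`Sum.inr false`) and the
target (`Sum.inr true`). -/
def Vert (g : SPD) : Type := g.Inner ⊕ Bool

def Arcs : SPD → Type
  | arc _ _ _ => Unit
  | series g₁ g₂ => g₁.Arcs ⊕ g₂.Arcs
  | parallel g₁ g₂ => g₁.Arcs ⊕ g₂.Arcs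

def origin (g : SPD) : g.Vert := Sum.inr false
def target (g : SPD) : g.Vert := Sum.inr true

def innerFintype : (g : SPD) → Fintype g.Inner
  | arc _ _ _ => inferInstanceAs (Fintype Empty)
  | series g₁ g₂ =>
      letI := g₁.innerFintype; letI := g₂.innerFintype
      inferInstanceAs (Fintype ((g₁.Inner ⊕ g₂.Inner) ⊕ Unit))
  | parallel g₁ g₂ =>
      letI := g₁.innerFintype; letI := g₂.innerFintype
      inferInstanceAs (Fintype (g₁.Inner ⊕ g₂.Inner))

instance (g : SPD) : Fintype g.Inner := g.innerFintype

def innerDecEq : (g : SPD) → DecidableEq g.Inner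
  | arc _ _ _ => inferInstanceAs (DecidableEq Empty)
  | series g₁ g₂ =>
      letI := g₁.innerDecEq; letI := g₂.innerDecEq
      inferInstanceAs (DecidableEq ((g₁.Inner ⊕ g₂.Inner) ⊕ Unit))
  | parallel g₁ g₂ =>
      letI := g₁.innerDecEq; letI := g₂.innerDecEq
      inferInstanceAs (DecidableEq (g₁.Inner ⊕ g₂.Inner))

instance (g : SPD) : DecidableEq g.Inner := g.innerDecEq
instance (g : SPD) : Fintype g.Vert := inferInstanceAs (Fintype (g.Inner ⊕ Bool))
instance (g : SPD) : DecidableEq g.Vert := inferInstanceAs (DecidableEq (g.Inner ⊕ Bool))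

def arcsFintype : (g : SPD) → Fintype g.Arcs
  | arc _ _ _ => inferInstanceAs (Fintype Unit)
  | series g₁ g₂ =>
      letI := g₁.arcsFintype; letI := g₂.arcsFintype
      inferInstanceAs (Fintype (g₁.Arcs ⊕ g₂.Arcs))
  | parallel g₁ g₂ =>
      letI := g₁.arcsFintype; letI := g₂.arcsFintype
      inferInstanceAs (Fintype (g₁.Arcs ⊕ g₂.Arcs))

instance (g : SPD) : Fintype g.Arcs := g.arcsFintype

def arcsDecEq : (g : SPD) → DecidableEq g.Arcs
  | arc _ _ _ => inferInstanceAs (DecidableEq Unit)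
  | series g₁ g₂ =>
      letI := g₁.arcsDecEq; letI := g₂.arcsDecEq
      inferInstanceAs (DecidableEq (g₁.Arcs ⊕ g₂.Arcs))
  | parallel g₁ g₂ =>
      letI := g₁.arcsDecEq; letI := g₂.arcsDecEq
      inferInstanceAs (DecidableEq (g₁.Arcs ⊕ g₂.Arcs))

instance (g : SPD) : DecidableEq g.Arcs := g.arcsDecEq

/-- Embedding of the vertices of the first factor into a series composition:
the target of `g₁` becomes the merged middle vertex. -/
def vmapS₁ (g₁ g₂ : SPD) : g₁.Vert → (series g₁ g₂).Vert
  | Sum.inl x => Sum.inl (Sum.inl (Sum.inl x))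
  | Sum.inr false => Sum.inr false
  | Sum.inr true => Sum.inl (Sum.inr ())

def vmapS₂ (g₁ g₂ : SPD) : g₂.Vert → (series g₁ g₂).Vert
  | Sum.inl x => Sum.inl (Sum.inl (Sum.inr x))
  | Sum.inr false => Sum.inl (Sum.inr ())
  | Sum.inr true => Sum.inr true

def vmapP₁ (g₁ g₂ : SPD) : g₁.Vert → (parallel g₁ g₂).Vert
  | Sum.inl x => Sum.inl (Sum.inl x)
  | Sum.inr b => Sum.inr b

def vmapP₂ (g₁ g₂ : SPD) : g₂.Vert → (parallel g₁ g₂).Vert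
  | Sum.inl x => Sum.inl (Sum.inr x)
  | Sum.inr b => Sum.inr b

def src : (g : SPD) → g.Arcs → g.Vert
  | arc _ _ _, _ => Sum.inr false
  | series g₁ g₂, Sum.inl a => vmapS₁ g₁ g₂ (g₁.src a)
  | series g₁ g₂, Sum.inr a => vmapS₂ g₁ g₂ (g₂.src a)
  | parallel g₁ g₂, Sum.inl a => vmapP₁ g₁ g₂ (g₁.src a)
  | parallel g₁ g₂, Sum.inr a => vmapP₂ g₁ g₂ (g₂.src a)

def dst : (g : SPD) → g.Arcs → g.Vert
  | arc _ _ _, _ => Sum.inr true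
  | series g₁ g₂, Sum.inl a => vmapS₁ g₁ g₂ (g₁.dst a)
  | series g₁ g₂, Sum.inr a => vmapS₂ g₁ g₂ (g₂.dst a)
  | parallel g₁ g₂, Sum.inl a => vmapP₁ g₁ g₂ (g₁.dst a)
  | parallel g₁ g₂, Sum.inr a => vmapP₂ g₁ g₂ (g₂.dst a)

def cap : (g : SPD) → g.Arcs → ℤ
  | arc _ u _, _ => u
  | series g₁ _, Sum.inl a => g₁.cap a
  | series _ g₂, Sum.inr a => g₂.cap a
  | parallel g₁ _, Sum.inl a => g₁.cap a
  | parallel _ g₂, Sum.inr a => g₂.cap a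

def cost : (g : SPD) → g.Arcs → ℤ
  | arc _ _ c, _ => c
  | series g₁ _, Sum.inl a => g₁.cost a
  | series _ g₂, Sum.inr a => g₂.cost a
  | parallel g₁ _, Sum.inl a => g₁.cost a
  | parallel _ g₂, Sum.inr a => g₂.cost a

def fixedArc : (g : SPD) → g.Arcs → Bool
  | arc b _ _, _ => b
  | series g₁ _, Sum.inl a => g₁.fixedArc a
  | series _ g₂, Sum.inr a => g₂.fixedArc a
  | parallel g₁ _, Sum.inl a => g₁.fixedArc a
  | parallel _ g₂, Sum.inr a => g₂.fixedArc a

/-- Net outflow minus inflow of an integral flow at a vertex. -/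
def excess (g : SPD) (f : g.Arcs → ℤ) (v : g.Vert) : ℤ :=
  ∑ a ∈ univ.filter (fun a => g.src a = v), f a -
    ∑ a ∈ univ.filter (fun a => g.dst a = v), f a

def IsFlow (g : SPD) (b : g.Vert → ℤ) (f : g.Arcs → ℤ) : Prop :=
  (∀ a, 0 ≤ f a ∧ f a ≤ g.cap a) ∧ ∀ v, g.excess f v = b v

def flowCost (g : SPD) (f : g.Arcs → ℤ) : ℤ := ∑ a, g.cost a * f a

/-- Balances of a unique source (the origin) / unique sink (the target) instance
with demand `d`. -/
def bal (g : SPD) (d : ℤ) : g.Vert → ℤ :=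
  fun v => if v = g.origin then d else if v = g.target then -d else 0

/-- A two-scenario integral robust `b`-flow with demands `d₁`, `d₂` from the origin
to the target: both scenario flows are feasible and they agree on all fixed arcs. -/
def IsRobust2 (g : SPD) (d₁ d₂ : ℤ) (f₁ f₂ : g.Arcs → ℤ) : Prop :=
  g.IsFlow (g.bal d₁) f₁ ∧ g.IsFlow (g.bal d₂) f₂ ∧
    ∀ a, g.fixedArc a = true → f₁ a = f₂ a

/-- Cost of a two-scenario robust flow: the maximum scenario cost. -/
def rcost (g : SPD) (f₁ f₂ : g.Arcs → ℤ) : ℤ := max (g.flowCost f₁) (g.flowCost f₂)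

/-- Optimality: minimum cost among all integral robust flows for the same demands. -/
def Optimal (g : SPD) (d₁ d₂ : ℤ) (f₁ f₂ : g.Arcs → ℤ) : Prop :=
  g.IsRobust2 d₁ d₂ f₁ f₂ ∧
    ∀ h₁ h₂, g.IsRobust2 d₁ d₂ h₁ h₂ → g.rcost f₁ f₂ ≤ g.rcost h₁ h₂

/-- Nonnegative capacities and costs. -/
def nonnegData (g : SPD) : Prop := ∀ a, 0 ≤ g.cap a ∧ 0 ≤ g.cost a

end SPD

/-!
Among the optimal robust flows take one minimising `∑ a, |f₁ a - f₂ a|`. If `f₂ a₀ < f₁ a₀`, then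
`z = f₁ - f₂` is conserved at the interior vertices and has value `d₁ - d₂ ≤ 0` at the origin.
On a series-parallel digraph such a `z` with a positive arc contains a circulation `w` that is
sign-conformal to `z` and has a positive arc: recurse into the side containing the positive arc,
unless in a parallel composition one side has positive and the other negative value, in which
case a unit origin-target path conformal to the positive side and a reversed one conformal to the
negative side form `w`. Conformality keeps `f₁ - w` and `f₂ + w` within the capacities and makes
`w` vanish on the fixed arcs, and of `(f₁ - w, f₂)` and `(f₁, f₂ + w)` one costs no more than
`(f₁, f₂)`; both are strictly closer, a contradiction.
-/

def SignConformal {ι : Type*} (w z : ι → ℤ) : Prop := ∀ i, w i ∈ Set.uIcc 0 (z i)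

namespace SignConformal

variable {ι κ : Type*} {w z : ι → ℤ}

lemma zero (z : ι → ℤ) : SignConformal 0 z := fun _ => Set.left_mem_uIcc

lemma neg (h : SignConformal w (-z)) : SignConformal (-w) z := fun i => by
  have := Set.mem_uIcc.1 (h i)
  simp only [Pi.neg_apply] at this ⊢
  exact Set.mem_uIcc.2 (by omega)

lemma sumElim {w₁ : ι → ℤ} {w₂ : κ → ℤ} {z : ι ⊕ κ → ℤ} (h₁ : SignConformal w₁ (z ∘ Sum.inl))
    (h₂ : SignConformal w₂ (z ∘ Sum.inr)) : SignConformal (Sum.elim w₁ w₂) z := by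
  rintro (i | i)
  exacts [h₁ i, h₂ i]

lemma eq_zero_of_eq_zero (h : SignConformal w z) {i : ι} (hi : z i = 0) : w i = 0 := by
  have := Set.mem_uIcc.1 (h i)
  omega

lemma abs_sub (h : SignConformal w z) (i : ι) : |z i - w i| = |z i| - |w i| := by
  rcases Set.mem_uIcc.1 (h i) with h | h
  · rw [abs_of_nonneg (by omega), abs_of_nonneg (by omega), abs_of_nonneg (by omega)]
  · rw [abs_of_nonpos (by omega), abs_of_nonpos (by omega), abs_of_nonpos (by omega)]
    ring

lemma sum_abs_sub_lt [Fintype ι] (h : SignConformal w z) {i : ι} (hi : w i ≠ 0) :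
    ∑ j, |z j - w j| < ∑ j, |z j| := by
  refine Finset.sum_lt_sum (fun j _ => ?_) ⟨i, Finset.mem_univ i, ?_⟩ <;>
    rw [h.abs_sub] <;> simp [hi]

end SignConformal

namespace SPD

variable {g g₁ g₂ : SPD}

lemma excess_eq_sum (g : SPD) (z : g.Arcs → ℤ) (v : g.Vert) :
    g.excess z v = ∑ a, ((if g.src a = v then z a else 0) - (if g.dst a = v then z a else 0)) := by
  rw [excess, Finset.sum_filter, Finset.sum_filter, ← Finset.sum_sub_distrib]

@[simp] lemma excess_zero (v : g.Vert) : g.excess 0 v = 0 := by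
  simp [excess]

@[simp] lemma excess_add (z w : g.Arcs → ℤ) (v : g.Vert) :
    g.excess (z + w) v = g.excess z v + g.excess w v := by
  simp only [excess, Pi.add_apply, Finset.sum_add_distrib]
  ring

@[simp] lemma excess_neg (z : g.Arcs → ℤ) (v : g.Vert) : g.excess (-z) v = -g.excess z v := by
  simp only [excess, Pi.neg_apply, Finset.sum_neg_distrib]
  ring

@[simp] lemma excess_sub (z w : g.Arcs → ℤ) (v : g.Vert) :
    g.excess (z - w) v = g.excess z v - g.excess w v := by
  simp [sub_eq_add_neg]

lemma sum_excess (z : g.Arcs → ℤ) : ∑ v, g.excess z v = 0 := by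
  simp only [excess_eq_sum]
  rw [Finset.sum_comm]
  simp [Finset.sum_sub_distrib]

/-- `Sum.inl v` typed as a vertex: a bare `Sum.inl v` has type `g.Inner ⊕ Bool`, which is not
syntactically `g.Vert`, and `rw`/`simp` then fail to match it. -/
def ofInner (g : SPD) (v : g.Inner) : g.Vert := Sum.inl v

lemma sum_vert (f : g.Vert → ℤ) :
    ∑ v, f v = ∑ v, f (g.ofInner v) + (f g.target + f g.origin) :=
  (Fintype.sum_sum_type f).trans (congrArg _ (Fintype.sum_bool _))

lemma origin_ne_target : g.origin ≠ g.target := nofun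

lemma ofInner_ne_origin (v : g.Inner) : g.ofInner v ≠ g.origin := nofun

lemma ofInner_ne_target (v : g.Inner) : g.ofInner v ≠ g.target := nofun

def Conserved (g : SPD) (z : g.Arcs → ℤ) : Prop := ∀ v, g.excess z (g.ofInner v) = 0

def value (g : SPD) (z : g.Arcs → ℤ) : ℤ := g.excess z g.origin

lemma conserved_zero : g.Conserved 0 := fun _ => excess_zero _

@[simp] lemma value_zero : g.value 0 = 0 := excess_zero _

lemma Conserved.neg {z : g.Arcs → ℤ} (hz : g.Conserved z) : g.Conserved (-z) := fun v =>
  (excess_neg z _).trans (neg_eq_zero.2 (hz v))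

@[simp] lemma value_neg (z : g.Arcs → ℤ) : g.value (-z) = -g.value z := excess_neg _ _

lemma excess_target_of_conserved {z : g.Arcs → ℤ} (hz : g.Conserved z) :
    g.excess z g.target = -g.value z := by
  have h := sum_excess z
  rw [sum_vert, Finset.sum_eq_zero fun v _ => hz v] at h
  rw [value]
  omega

lemma excess_eq_zero_of_conserved {z : g.Arcs → ℤ} (hz : g.Conserved z) (h0 : g.value z = 0) :
    ∀ v, g.excess z v = 0
  | Sum.inl v => hz v
  | Sum.inr false => h0
  | Sum.inr true => by rw [← target, excess_target_of_conserved hz, h0, neg_zero]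

lemma vmapS₁_injective : Function.Injective (vmapS₁ g₁ g₂) := by
  rintro (x | _ | _) (y | _ | _) h <;> cases h <;> rfl

lemma vmapS₂_injective : Function.Injective (vmapS₂ g₁ g₂) := by
  rintro (x | _ | _) (y | _ | _) h <;> cases h <;> rfl

lemma vmapP₁_injective : Function.Injective (vmapP₁ g₁ g₂) := by
  rintro (x | _) (y | _) h <;> cases h <;> rfl

lemma vmapP₂_injective : Function.Injective (vmapP₂ g₁ g₂) := by
  rintro (x | _) (y | _) h <;> cases h <;> rfl

lemma vmapS₁_eq_vmapS₂_iff {x : g₁.Vert} {y : g₂.Vert} :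
    vmapS₁ g₁ g₂ x = vmapS₂ g₁ g₂ y ↔ x = g₁.target ∧ y = g₂.origin := by
  refine ⟨fun h => ?_, fun ⟨hx, hy⟩ => hx ▸ hy ▸ rfl⟩
  rcases x with x | _ | _ <;> rcases y with y | _ | _ <;> cases h
  exact ⟨rfl, rfl⟩

lemma vmapS₂_eq_vmapS₁_iff {x : g₁.Vert} {y : g₂.Vert} :
    vmapS₂ g₁ g₂ y = vmapS₁ g₁ g₂ x ↔ y = g₂.origin ∧ x = g₁.target :=
  eq_comm.trans (vmapS₁_eq_vmapS₂_iff.trans and_comm)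

lemma vmapP₂_ne_vmapP₁_ofInner (y : g₂.Vert) (v : g₁.Inner) :
    vmapP₂ g₁ g₂ y ≠ vmapP₁ g₁ g₂ (g₁.ofInner v) := by
  rcases y with y | _ <;> nofun

lemma vmapP₁_ne_vmapP₂_ofInner (x : g₁.Vert) (v : g₂.Inner) :
    vmapP₁ g₁ g₂ x ≠ vmapP₂ g₁ g₂ (g₂.ofInner v) := by
  rcases x with x | _ <;> nofun

lemma sum_arcs_series (f : (series g₁ g₂).Arcs → ℤ) :
    ∑ a, f a = ∑ a, f (Sum.inl a) + ∑ a, f (Sum.inr a) :=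
  Fintype.sum_sum_type f

lemma sum_arcs_parallel (f : (parallel g₁ g₂).Arcs → ℤ) :
    ∑ a, f a = ∑ a, f (Sum.inl a) + ∑ a, f (Sum.inr a) :=
  Fintype.sum_sum_type f

lemma excess_series_vmapS₁ (z : (series g₁ g₂).Arcs → ℤ) (x : g₁.Vert) :
    (series g₁ g₂).excess z (vmapS₁ g₁ g₂ x) =
      g₁.excess (z ∘ Sum.inl) x + if x = g₁.target then g₂.value (z ∘ Sum.inr) else 0 := by
  rw [excess_eq_sum, sum_arcs_series]
  simp only [src, dst, vmapS₁_injective.eq_iff, vmapS₂_eq_vmapS₁_iff, ← excess_eq_sum]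
  by_cases hx : x = g₁.target
  · simp only [hx, and_true, if_true, ← excess_eq_sum]; rfl
  · simp only [hx, and_false, if_false, sub_self, Finset.sum_const_zero, add_zero]; rfl

lemma excess_series_vmapS₂ (z : (series g₁ g₂).Arcs → ℤ) (y : g₂.Vert) (hy : y ≠ g₂.origin) :
    (series g₁ g₂).excess z (vmapS₂ g₁ g₂ y) = g₂.excess (z ∘ Sum.inr) y := by
  rw [excess_eq_sum, sum_arcs_series]
  simp only [src, dst, vmapS₂_injective.eq_iff, vmapS₁_eq_vmapS₂_iff, hy, and_false, if_false,
    sub_self, Finset.sum_const_zero, zero_add, ← excess_eq_sum]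
  rfl

lemma excess_parallel_vmapP₁_ofInner (z : (parallel g₁ g₂).Arcs → ℤ) (v : g₁.Inner) :
    (parallel g₁ g₂).excess z (vmapP₁ g₁ g₂ (g₁.ofInner v)) =
      g₁.excess (z ∘ Sum.inl) (g₁.ofInner v) := by
  rw [excess_eq_sum, sum_arcs_parallel]
  simp only [src, dst, vmapP₁_injective.eq_iff, vmapP₂_ne_vmapP₁_ofInner, if_false, sub_self,
    Finset.sum_const_zero, add_zero, ← excess_eq_sum]
  rfl

lemma excess_parallel_vmapP₂_ofInner (z : (parallel g₁ g₂).Arcs → ℤ) (v : g₂.Inner) :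
    (parallel g₁ g₂).excess z (vmapP₂ g₁ g₂ (g₂.ofInner v)) =
      g₂.excess (z ∘ Sum.inr) (g₂.ofInner v) := by
  rw [excess_eq_sum, sum_arcs_parallel]
  simp only [src, dst, vmapP₂_injective.eq_iff, vmapP₁_ne_vmapP₂_ofInner, if_false, sub_self,
    Finset.sum_const_zero, zero_add, ← excess_eq_sum]
  rfl

lemma value_parallel (z : (parallel g₁ g₂).Arcs → ℤ) :
    (parallel g₁ g₂).value z = g₁.value (z ∘ Sum.inl) + g₂.value (z ∘ Sum.inr) := by
  rw [value, excess_eq_sum, sum_arcs_parallel]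
  simp only [src, dst, show (parallel g₁ g₂).origin = vmapP₁ g₁ g₂ g₁.origin from rfl,
    vmapP₁_injective.eq_iff]
  simp only [show vmapP₁ g₁ g₂ g₁.origin = vmapP₂ g₁ g₂ g₂.origin from rfl,
    vmapP₂_injective.eq_iff, ← excess_eq_sum]
  rfl

lemma conserved_series_iff {z : (series g₁ g₂).Arcs → ℤ} :
    (series g₁ g₂).Conserved z ↔
      g₁.Conserved (z ∘ Sum.inl) ∧ g₂.Conserved (z ∘ Sum.inr) ∧
        g₁.value (z ∘ Sum.inl) = g₂.value (z ∘ Sum.inr) := by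
  have inner₁ (v : g₁.Inner) : (series g₁ g₂).excess z (vmapS₁ g₁ g₂ (g₁.ofInner v)) =
      g₁.excess (z ∘ Sum.inl) (g₁.ofInner v) := by
    rw [excess_series_vmapS₁, if_neg (ofInner_ne_target v), add_zero]
  have inner₂ (v : g₂.Inner) : (series g₁ g₂).excess z (vmapS₂ g₁ g₂ (g₂.ofInner v)) =
      g₂.excess (z ∘ Sum.inr) (g₂.ofInner v) :=
    excess_series_vmapS₂ z _ (ofInner_ne_origin v)
  have middle : (series g₁ g₂).excess z (vmapS₁ g₁ g₂ g₁.target) =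
      g₁.excess (z ∘ Sum.inl) g₁.target + g₂.value (z ∘ Sum.inr) := by
    rw [excess_series_vmapS₁, if_pos rfl]
  constructor
  · intro h
    have h₁ : g₁.Conserved (z ∘ Sum.inl) := fun v =>
      (inner₁ v).symm.trans (h (Sum.inl (Sum.inl v)))
    refine ⟨h₁, fun v => (inner₂ v).symm.trans (h (Sum.inl (Sum.inr v))), ?_⟩
    have := middle.symm.trans (h (Sum.inr ()))
    rw [excess_target_of_conserved h₁] at this
    omega
  · rintro ⟨h₁, h₂, hv⟩ ((v | v) | ⟨⟩)
    · exact (inner₁ v).trans (h₁ v)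
    · exact (inner₂ v).trans (h₂ v)
    · exact middle.trans (by rw [excess_target_of_conserved h₁, hv, neg_add_cancel])

lemma value_series (z : (series g₁ g₂).Arcs → ℤ) :
    (series g₁ g₂).value z = g₁.value (z ∘ Sum.inl) := by
  rw [value, show (series g₁ g₂).origin = vmapS₁ g₁ g₂ g₁.origin from rfl, excess_series_vmapS₁,
    if_neg origin_ne_target, add_zero, value]

lemma conserved_parallel_iff {z : (parallel g₁ g₂).Arcs → ℤ} :
    (parallel g₁ g₂).Conserved z ↔ g₁.Conserved (z ∘ Sum.inl) ∧ g₂.Conserved (z ∘ Sum.inr) := by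
  constructor
  · intro h
    exact ⟨fun v => (excess_parallel_vmapP₁_ofInner z v).symm.trans (h (Sum.inl v)),
      fun v => (excess_parallel_vmapP₂_ofInner z v).symm.trans (h (Sum.inr v))⟩
  · rintro ⟨h₁, h₂⟩ (v | v)
    · exact (excess_parallel_vmapP₁_ofInner z v).trans (h₁ v)
    · exact (excess_parallel_vmapP₂_ofInner z v).trans (h₂ v)

lemma conserved_arc (b : Bool) (u c : ℤ) (z : (arc b u c).Arcs → ℤ) : (arc b u c).Conserved z :=
  nofun

lemma value_arc (b : Bool) (u c : ℤ) (z : (arc b u c).Arcs → ℤ) : (arc b u c).value z = z () := by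
  rw [value, excess_eq_sum]
  refine (Fintype.sum_unique (ι := Unit) _).trans ?_
  change (if (arc b u c).origin = _ then z () else 0) -
    (if (arc b u c).target = _ then z () else 0) = _
  rw [if_pos rfl, if_neg origin_ne_target.symm, sub_zero]

theorem dst_ne_origin : ∀ {g : SPD} (a : g.Arcs), g.dst a ≠ g.origin
  | arc _ _ _, _ => origin_ne_target.symm
  | series _ _, Sum.inl a => vmapS₁_injective.ne (dst_ne_origin a)
  | series g₁ g₂, Sum.inr a => fun h =>
    origin_ne_target (vmapS₂_eq_vmapS₁_iff (x := g₁.origin) (y := g₂.dst a) |>.1 h).2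
  | parallel _ _, Sum.inl a => vmapP₁_injective.ne (dst_ne_origin a)
  | parallel _ _, Sum.inr a => vmapP₂_injective.ne (dst_ne_origin a)

lemma exists_pos_of_value_pos {z : g.Arcs → ℤ} (h : 0 < g.value z) : ∃ a, 0 < z a := by
  by_contra! hz
  have : g.value z ≤ 0 := by
    rw [value, excess, Finset.filter_false_of_mem fun a _ => dst_ne_origin a, Finset.sum_empty,
      sub_zero]
    exact Finset.sum_nonpos fun a _ => hz a
  omega

theorem exists_signConformal_unit (g : SPD) {z : g.Arcs → ℤ} (hz : g.Conserved z)
    (hpos : 0 < g.value z) : ∃ w, SignConformal w z ∧ g.Conserved w ∧ g.value w = 1 := by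
  induction g with
  | arc b u c =>
    rw [value_arc] at hpos
    exact ⟨1, fun _ => Set.mem_uIcc.2 (Or.inl ⟨zero_le_one, hpos⟩), conserved_arc _ _ _ _,
      value_arc _ _ _ _⟩
  | series g₁ g₂ ih₁ ih₂ =>
    obtain ⟨hz₁, hz₂, hv⟩ := conserved_series_iff.1 hz
    rw [value_series] at hpos
    obtain ⟨w₁, hc₁, hw₁, hv₁⟩ := ih₁ hz₁ hpos
    obtain ⟨w₂, hc₂, hw₂, hv₂⟩ := ih₂ hz₂ (hv ▸ hpos)
    exact ⟨Sum.elim w₁ w₂, hc₁.sumElim hc₂, conserved_series_iff.2 ⟨hw₁, hw₂, hv₁.trans hv₂.symm⟩,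
      (value_series _).trans hv₁⟩
  | parallel g₁ g₂ ih₁ ih₂ =>
    obtain ⟨hz₁, hz₂⟩ := conserved_parallel_iff.1 hz
    rw [value_parallel] at hpos
    by_cases h₁ : 0 < g₁.value (z ∘ Sum.inl)
    · obtain ⟨w, hc, hw, hv⟩ := ih₁ hz₁ h₁
      refine ⟨Sum.elim w 0, hc.sumElim (.zero _), conserved_parallel_iff.2 ⟨hw, conserved_zero⟩, ?_⟩
      exact (value_parallel _).trans
        (show g₁.value w + g₂.value 0 = 1 by rw [hv, value_zero, add_zero])
    · obtain ⟨w, hc, hw, hv⟩ := ih₂ hz₂ (by omega)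
      refine ⟨Sum.elim 0 w, (SignConformal.zero _).sumElim hc,
        conserved_parallel_iff.2 ⟨conserved_zero, hw⟩, ?_⟩
      exact (value_parallel _).trans
        (show g₁.value 0 + g₂.value w = 1 by rw [hv, value_zero, zero_add])

lemma exists_signConformal_neg_unit {z : g.Arcs → ℤ} (hz : g.Conserved z) (hneg : g.value z < 0) :
    ∃ w, SignConformal w z ∧ g.Conserved w ∧ g.value w = -1 := by
  obtain ⟨w, hc, hw, hv⟩ := exists_signConformal_unit g hz.neg (by rw [value_neg]; omega)
  exact ⟨-w, hc.neg, hw.neg, by rw [value_neg, hv]⟩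

theorem exists_signConformal_circulation (g : SPD) {z : g.Arcs → ℤ} (hz : g.Conserved z)
    (hval : g.value z ≤ 0) {a₀ : g.Arcs} (ha₀ : 0 < z a₀) :
    ∃ w, SignConformal w z ∧ g.Conserved w ∧ g.value w = 0 ∧ ∃ a, 0 < w a := by
  induction g with
  | arc b u c =>
    rw [value_arc] at hval
    exact absurd ha₀ hval.not_gt
  | series g₁ g₂ ih₁ ih₂ =>
    obtain ⟨hz₁, hz₂, hv⟩ := conserved_series_iff.1 hz
    rw [value_series] at hval
    rcases a₀ with a₀ | a₀
    · obtain ⟨w, hc, hw, hv₀, a, ha⟩ := ih₁ hz₁ hval ha₀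
      exact ⟨Sum.elim w 0, hc.sumElim (.zero _),
        conserved_series_iff.2 ⟨hw, conserved_zero, hv₀.trans value_zero.symm⟩,
        (value_series _).trans hv₀, Sum.inl a, ha⟩
    · obtain ⟨w, hc, hw, hv₀, a, ha⟩ := ih₂ hz₂ (hv ▸ hval) ha₀
      exact ⟨Sum.elim 0 w, (SignConformal.zero _).sumElim hc,
        conserved_series_iff.2 ⟨conserved_zero, hw, value_zero.trans hv₀.symm⟩,
        (value_series _).trans value_zero, Sum.inr a, ha⟩
  | parallel g₁ g₂ ih₁ ih₂ =>
    obtain ⟨hz₁, hz₂⟩ := conserved_parallel_iff.1 hz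
    rw [value_parallel] at hval
    have combine {w₁ : g₁.Arcs → ℤ} {w₂ : g₂.Arcs → ℤ} (hc₁ : SignConformal w₁ (z ∘ Sum.inl))
        (hc₂ : SignConformal w₂ (z ∘ Sum.inr)) (hw₁ : g₁.Conserved w₁) (hw₂ : g₂.Conserved w₂)
        (hv : g₁.value w₁ + g₂.value w₂ = 0) :
        SignConformal (Sum.elim w₁ w₂) z ∧ (parallel g₁ g₂).Conserved (Sum.elim w₁ w₂) ∧
          (parallel g₁ g₂).value (Sum.elim w₁ w₂) = 0 :=
      ⟨hc₁.sumElim hc₂, conserved_parallel_iff.2 ⟨hw₁, hw₂⟩, (value_parallel _).trans hv⟩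
    by_cases h₁ : 0 < g₁.value (z ∘ Sum.inl)
    · obtain ⟨u₁, hc₁, hu₁, hv₁⟩ := exists_signConformal_unit g₁ hz₁ h₁
      obtain ⟨u₂, hc₂, hu₂, hv₂⟩ := exists_signConformal_neg_unit hz₂ (by omega)
      obtain ⟨a, ha⟩ := exists_pos_of_value_pos (hv₁ ▸ one_pos)
      obtain ⟨hc, hw, hv⟩ := combine hc₁ hc₂ hu₁ hu₂ (by rw [hv₁, hv₂, add_neg_cancel])
      exact ⟨_, hc, hw, hv, Sum.inl a, ha⟩
    by_cases h₂ : 0 < g₂.value (z ∘ Sum.inr)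
    · obtain ⟨u₁, hc₁, hu₁, hv₁⟩ := exists_signConformal_neg_unit hz₁ (by omega)
      obtain ⟨u₂, hc₂, hu₂, hv₂⟩ := exists_signConformal_unit g₂ hz₂ h₂
      obtain ⟨a, ha⟩ := exists_pos_of_value_pos (hv₂ ▸ one_pos)
      obtain ⟨hc, hw, hv⟩ := combine hc₁ hc₂ hu₁ hu₂ (by rw [hv₁, hv₂, neg_add_cancel])
      exact ⟨_, hc, hw, hv, Sum.inr a, ha⟩
    rw [not_lt] at h₁ h₂
    rcases a₀ with a₀ | a₀
    · obtain ⟨w, hc, hw, hv₀, a, ha⟩ := ih₁ hz₁ h₁ ha₀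
      obtain ⟨hc, hw, hv⟩ :=
        combine hc (.zero _) hw conserved_zero (by rw [hv₀, value_zero, add_zero])
      exact ⟨_, hc, hw, hv, Sum.inl a, ha⟩
    · obtain ⟨w, hc, hw, hv₀, a, ha⟩ := ih₂ hz₂ h₂ ha₀
      obtain ⟨hc, hw, hv⟩ :=
        combine (.zero _) hc conserved_zero hw (by rw [hv₀, value_zero, add_zero])
      exact ⟨_, hc, hw, hv, Sum.inr a, ha⟩

lemma flowCost_add (f w : g.Arcs → ℤ) : g.flowCost (f + w) = g.flowCost f + g.flowCost w := by
  simp only [flowCost, Pi.add_apply, mul_add, Finset.sum_add_distrib]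

lemma flowCost_sub (f w : g.Arcs → ℤ) : g.flowCost (f - w) = g.flowCost f - g.flowCost w := by
  simp only [flowCost, Pi.sub_apply, mul_sub, Finset.sum_sub_distrib]

lemma finite_setOf_isFlow (g : SPD) (b : g.Vert → ℤ) : {f | g.IsFlow b f}.Finite :=
  (Fintype.piFinset fun a => Finset.Icc 0 (g.cap a)).finite_toSet.subset fun _ hf =>
    Fintype.mem_piFinset.2 fun a => Finset.mem_Icc.2 (hf.1 a)

lemma finite_setOf_isRobust2 (g : SPD) (d₁ d₂ : ℤ) :
    {p : (g.Arcs → ℤ) × (g.Arcs → ℤ) | g.IsRobust2 d₁ d₂ p.1 p.2}.Finite :=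
  ((g.finite_setOf_isFlow _).prod (g.finite_setOf_isFlow _)).subset fun _ hp => ⟨hp.1, hp.2.1⟩

lemma IsFlow.sub_add_of_signConformal {b₁ b₂ : g.Vert → ℤ} {f₁ f₂ w : g.Arcs → ℤ}
    (hf₁ : g.IsFlow b₁ f₁) (hf₂ : g.IsFlow b₂ f₂) (hc : SignConformal w (f₁ - f₂))
    (hw : ∀ v, g.excess w v = 0) : g.IsFlow b₁ (f₁ - w) ∧ g.IsFlow b₂ (f₂ + w) := by
  have bounds (a) := Set.mem_uIcc.1 (hc a)
  refine ⟨⟨fun a => ?_, fun v => ?_⟩, ⟨fun a => ?_, fun v => ?_⟩⟩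
  · have := bounds a; have := hf₁.1 a; have := hf₂.1 a
    simp only [Pi.sub_apply] at *
    omega
  · rw [excess_sub, hw, sub_zero, hf₁.2]
  · have := bounds a; have := hf₁.1 a; have := hf₂.1 a
    simp only [Pi.sub_apply, Pi.add_apply] at *
    omega
  · rw [excess_add, hw, add_zero, hf₂.2]

lemma exists_isRobust2_rcost_le_of_lt {d₁ d₂ : ℤ} (hd : d₁ ≤ d₂) {f₁ f₂ : g.Arcs → ℤ}
    (hf : g.IsRobust2 d₁ d₂ f₁ f₂) {a₀ : g.Arcs} (ha₀ : f₂ a₀ < f₁ a₀) :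
    ∃ h₁ h₂, g.IsRobust2 d₁ d₂ h₁ h₂ ∧ g.rcost h₁ h₂ ≤ g.rcost f₁ f₂ ∧
      ∑ a, |h₁ a - h₂ a| < ∑ a, |f₁ a - f₂ a| := by
  obtain ⟨hf₁, hf₂, hfix⟩ := hf
  have hz : g.Conserved (f₁ - f₂) := fun v => by
    rw [excess_sub, hf₁.2, hf₂.2]
    simp [bal, ofInner_ne_origin, ofInner_ne_target]
  have hval : g.value (f₁ - f₂) ≤ 0 := by
    rw [value, excess_sub, hf₁.2, hf₂.2]
    simpa [bal] using hd
  obtain ⟨w, hc, hw, hw₀, a, ha⟩ :=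
    exists_signConformal_circulation g hz hval (a₀ := a₀) (sub_pos.2 ha₀)
  obtain ⟨hflow₁, hflow₂⟩ :=
    hf₁.sub_add_of_signConformal hf₂ hc (excess_eq_zero_of_conserved hw hw₀)
  have hwfix (a) (h : g.fixedArc a = true) : w a = 0 :=
    hc.eq_zero_of_eq_zero (sub_eq_zero.2 (hfix a h))
  have hcloser := hc.sum_abs_sub_lt ha.ne'
  rcases le_or_gt 0 (g.flowCost w) with hcw | hcw
  · refine ⟨f₁ - w, f₂, ⟨hflow₁, hf₂, fun a h => ?_⟩, ?_, ?_⟩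
    · simp [hfix a h, hwfix a h]
    · exact max_le_max (by rw [flowCost_sub]; omega) le_rfl
    · simpa [sub_right_comm] using hcloser
  · refine ⟨f₁, f₂ + w, ⟨hf₁, hflow₂, fun a h => ?_⟩, ?_, ?_⟩
    · simp [hfix a h, hwfix a h]
    · exact max_le_max le_rfl (by rw [flowCost_add]; omega)
    · simpa [sub_add_eq_sub_sub] using hcloser

end SPD

theorem pointwise_monotone_optimal_exists_general (g : SPD)
    (d₁ d₂ : ℤ) (hd : d₁ ≤ d₂)
    (hfeas : ∃ f₁ f₂, g.IsRobust2 d₁ d₂ f₁ f₂) :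
    ∃ f₁ f₂, g.Optimal d₁ d₂ f₁ f₂ ∧ ∀ a, f₁ a ≤ f₂ a := by
  obtain ⟨p, hp, hp_min⟩ := Set.exists_min_image _ (fun p => g.rcost p.1 p.2)
    (g.finite_setOf_isRobust2 d₁ d₂) (let ⟨f₁, f₂, h⟩ := hfeas; ⟨(f₁, f₂), h⟩)
  obtain ⟨q, ⟨hq, hq_cost⟩, hq_min⟩ := Set.exists_min_image
    {q : (g.Arcs → ℤ) × (g.Arcs → ℤ) |
      g.IsRobust2 d₁ d₂ q.1 q.2 ∧ g.rcost q.1 q.2 ≤ g.rcost p.1 p.2}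
    (fun q => ∑ a, |q.1 a - q.2 a|)
    ((g.finite_setOf_isRobust2 d₁ d₂).subset fun _ h => h.1) ⟨p, hp, le_rfl⟩
  refine ⟨q.1, q.2, ⟨hq, fun h₁ h₂ h => hq_cost.trans (hp_min (h₁, h₂) h)⟩, fun a => ?_⟩
  by_contra! ha
  obtain ⟨h₁, h₂, hh, hh_cost, hh_closer⟩ := SPD.exists_isRobust2_rcost_le_of_lt hd hq ha
  exact (hq_min (h₁, h₂) ⟨hh, hh_cost.trans hq_cost⟩).not_gt hh_closer

/-- Lemma 10 of the paper: for a two-scenario instance on an SP digraph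
with unique source at the origin, unique sink at the target, and demands `d₁ ≤ d₂`, if
a robust flow exists then there exists an optimal integral robust flow `(f₁, f₂)` with
`f₂(a) ≥ f₁(a)` for every arc `a`. -/
theorem pointwise_monotone_optimal_exists (g : SPD) (hg : g.nonnegData)
    (d₁ d₂ : ℤ) (hd₀ : 0 ≤ d₁) (hd : d₁ ≤ d₂)
    (hfeas : ∃ f₁ f₂, g.IsRobust2 d₁ d₂ f₁ f₂) :
    ∃ f₁ f₂, g.Optimal d₁ d₂ f₁ f₂ ∧ ∀ a, f₁ a ≤ f₂ a :=
  pointwise_monotone_optimal_exists_general g d₁ d₂ hd hfeas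
end

section
/- For a robust flow instance with a constant number k of fixed arcs, the problem reduces to a mixed-integer program with only k integer variables: there exists an optimal integral robust b-flow whose restriction to the fixed arcs is an optimal solution of the problem 'choose an integral load ell on the k fixed arcs, then for each scenario solve a fractional minimum cost flow on G minus the fixed arcs with adjusted balances'; moreover, given the optimal integral load ell, an optimal integral robust flow with that load can be recovered by solving |Lambda| independent integral minimum cost flow problems. -/
open Finset

variable {V A : Type} [Fintype V] [Fintype A] [DecidableEq V]

/-- head of an oriented arc -/
def RFhd (N : Net V A) (p : A × Bool) : V := if p.2 then N.src p.1 else N.dst p.1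
/-- tail of an oriented arc -/
def RFtl (N : Net V A) (p : A × Bool) : V := if p.2 then N.dst p.1 else N.src p.1

lemma exists_circulation (N : Net V A) (F : Finset A) (hF : F.Nonempty)
    (hdeg : ∀ a ∈ F, N.src a ≠ N.dst a → ∀ v : V, (N.src a = v ∨ N.dst a = v) →
      ∃ a', a' ∈ F ∧ a' ≠ a ∧ (N.src a' = v ∨ N.dst a' = v)) :
    ∃ σ : A → ℤ, (∀ v, excess N σ v = 0) ∧ (∀ a, σ a ≠ 0 → a ∈ F) ∧
      (∀ a, |σ a| ≤ 1) ∧ (∃ a, σ a ≠ 0) := by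
  classical
  by_cases hloop : ∃ a ∈ F, N.src a = N.dst a
  · obtain ⟨a, haF, hl⟩ := hloop
    refine ⟨fun x => if x = a then 1 else 0, ?_, ?_, ?_, ⟨a, by simp⟩⟩
    · intro v
      rw [excess, Finset.sum_ite_eq', Finset.sum_ite_eq']
      simp [hl]
    · intro x hx
      by_cases h : x = a
      · exact h ▸ haF
      · simp [h] at hx
    · intro x
      by_cases h : x = a <;> simp [h]
  · push_neg at hloop
    obtain ⟨a0, ha0⟩ := hF
    have hstep : ∀ p : A × Bool, ∃ q : A × Bool, p.1 ∈ F →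
        q.1 ∈ F ∧ q.1 ≠ p.1 ∧ RFhd N q = RFtl N p := by
      intro p
      by_cases hp : p.1 ∈ F
      · obtain ⟨a', ha'F, ha'ne, hinc⟩ := hdeg p.1 hp (hloop p.1 hp) (RFtl N p)
          (by rcases Bool.eq_false_or_eq_true p.2 with hb | hb <;> simp [RFtl, hb])
        by_cases hsrc : N.src a' = RFtl N p
        · exact ⟨(a', true), fun _ => ⟨ha'F, ha'ne, by simp [RFhd, hsrc]⟩⟩
        · exact ⟨(a', false), fun _ => ⟨ha'F, ha'ne, by
            show (if (false : Bool) then N.src a' else N.dst a') = RFtl N p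
            simpa using hinc.resolve_left hsrc⟩⟩
      · exact ⟨p, fun h => absurd h hp⟩
    choose step hstepspec using hstep
    set s : ℕ → A × Bool := fun n => step^[n] (a0, true) with hsdef
    have hsucc : ∀ n, s (n + 1) = step (s n) := fun n => Function.iterate_succ_apply' step n _
    have hmem : ∀ n, (s n).1 ∈ F := by
      intro n
      induction n with
      | zero => exact ha0
      | succ n ih => rw [hsucc]; exact (hstepspec (s n) ih).1
    have hchain : ∀ n, RFhd N (s (n + 1)) = RFtl N (s n) := fun n => by
      rw [hsucc]; exact (hstepspec (s n) (hmem n)).2.2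
    have hne : ∀ n, (s (n + 1)).1 ≠ (s n).1 := fun n => by
      rw [hsucc]; exact (hstepspec (s n) (hmem n)).2.1
    set v : ℕ → V := fun n => RFhd N (s n) with hvdef
    have hvsucc : ∀ n, v (n + 1) = RFtl N (s n) := fun n => hchain n
    have hcard : Fintype.card V < Fintype.card (Fin (Fintype.card V + 1)) := by simp
    obtain ⟨x, y, hxy, hvxy⟩ := Fintype.exists_ne_map_eq_of_card_lt
      (fun i : Fin (Fintype.card V + 1) => v i.1) hcard
    have hP : ∃ j, ∃ i, i < j ∧ v i = v j := by
      rcases lt_or_gt_of_ne hxy with h | h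
      · exact ⟨y.1, x.1, h, hvxy⟩
      · exact ⟨x.1, y.1, h, hvxy.symm⟩
    set j := Nat.find hP with hjdef
    obtain ⟨i, hij, hvij⟩ := Nat.find_spec hP
    have vinj : ∀ x y, x < j → y < j → v x = v y → x = y := by
      intro x y hx hy hxy
      rcases lt_trichotomy x y with h | h | h
      · exact absurd ⟨x, h, hxy⟩ (Nat.find_min hP hy)
      · exact h
      · exact absurd ⟨y, h, hxy.symm⟩ (Nat.find_min hP hx)
    have hfact : ∀ l, (v l = N.src (s l).1 ∧ v (l + 1) = N.dst (s l).1) ∨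
        (v l = N.dst (s l).1 ∧ v (l + 1) = N.src (s l).1) := by
      intro l
      rw [hvsucc]
      rcases Bool.eq_false_or_eq_true (s l).2 with hb | hb
      · left; constructor <;> simp [hvdef, RFhd, RFtl, hb]
      · right; constructor <;> simp [hvdef, RFhd, RFtl, hb]
    have key : ∀ l1 l2, l1 < l2 → l2 < j → (s l1).1 = (s l2).1 → False := by
      intro l1 l2 h12 h2j heq
      have h1j : l1 < j := h12.trans h2j
      rcases hfact l1 with ⟨h1a, h1b⟩ | ⟨h1a, h1b⟩ <;>
        rcases hfact l2 with ⟨h2a, h2b⟩ | ⟨h2a, h2b⟩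
      · exact absurd (vinj l1 l2 h1j h2j (by rw [h1a, h2a, heq])) (by omega)
      · have h : l1 + 1 = l2 := vinj _ _ (by omega) h2j (by rw [h1b, h2a, heq])
        exact hne l1 (by rw [h, ← heq])
      · have h : l1 + 1 = l2 := vinj _ _ (by omega) h2j (by rw [h1b, h2a, heq])
        exact hne l1 (by rw [h, ← heq])
      · exact absurd (vinj l1 l2 h1j h2j (by rw [h1a, h2a, heq])) (by omega)
    have once : ∀ l1 l2, l1 < j → l2 < j → (s l1).1 = (s l2).1 → l1 = l2 := by
      intro l1 l2 h1 h2 heq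
      rcases lt_trichotomy l1 l2 with h | h | h
      · exact absurd (key l1 l2 h h2 heq) (by simp)
      · exact h
      · exact absurd (key l2 l1 h h1 heq.symm) (by simp)
    refine ⟨fun a => ∑ l ∈ Finset.Ico i j,
      if (s l).1 = a then (if (s l).2 then 1 else -1) else 0, ?_, ?_, ?_, ?_⟩
    · intro v0
      have hswap : ∀ S : Finset A,
          (∑ a ∈ S, ∑ l ∈ Finset.Ico i j,
            if (s l).1 = a then (if (s l).2 then (1 : ℤ) else -1) else 0)
          = ∑ l ∈ Finset.Ico i j,
            (if (s l).1 ∈ S then (if (s l).2 then (1 : ℤ) else -1) else 0) := by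
        intro S
        rw [Finset.sum_comm]
        exact Finset.sum_congr rfl fun l _ => Finset.sum_ite_eq _ _ _
      rw [excess, hswap, hswap, ← Finset.sum_sub_distrib]
      have hterm : ∀ l, ((if (s l).1 ∈ univ.filter (fun a => N.src a = v0)
            then (if (s l).2 then (1 : ℤ) else -1) else 0)
          - (if (s l).1 ∈ univ.filter (fun a => N.dst a = v0)
            then (if (s l).2 then (1 : ℤ) else -1) else 0))
          = ((if v l = v0 then (1 : ℤ) else 0) - (if v (l + 1) = v0 then 1 else 0)) := by
        intro l
        simp only [Finset.mem_filter, Finset.mem_univ, true_and]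
        rw [hvsucc l]
        rcases Bool.eq_false_or_eq_true (s l).2 with hb | hb <;>
          · simp only [hvdef, RFhd, RFtl, hb]
            by_cases h1 : N.src (s l).1 = v0 <;> by_cases h2 : N.dst (s l).1 = v0 <;>
              simp [h1, h2]
      rw [Finset.sum_congr rfl fun l _ => hterm l]
      rw [Finset.sum_Ico_eq_sum_range]
      have htel := Finset.sum_range_sub' (fun m => if v (i + m) = v0 then (1 : ℤ) else 0) (j - i)
      simp only [Nat.add_assoc] at *
      rw [htel, Nat.add_zero, Nat.add_sub_cancel' (le_of_lt hij)]
      simp [hvij]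
    · intro a ha
      by_contra haF
      apply ha
      apply Finset.sum_eq_zero
      intro l _
      rw [if_neg]
      intro h
      exact haF (h ▸ hmem l)
    · intro a
      show |∑ l ∈ Finset.Ico i j, if (s l).1 = a then (if (s l).2 then (1 : ℤ) else -1) else 0| ≤ 1
      by_cases hex : ∃ l, l ∈ Finset.Ico i j ∧ (s l).1 = a
      · obtain ⟨l0, hl0, hl0a⟩ := hex
        rw [Finset.sum_eq_single_of_mem l0 hl0]
        · rw [if_pos hl0a]
          rcases Bool.eq_false_or_eq_true (s l0).2 with hb | hb <;> simp [hb]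
        · intro l hl hlne
          rw [if_neg]
          intro h
          exact hlne (once l l0 (Finset.mem_Ico.mp hl).2 (Finset.mem_Ico.mp hl0).2
            (h.trans hl0a.symm))
      · rw [Finset.sum_eq_zero]
        · simp
        · intro l hl
          rw [if_neg]
          intro h
          exact hex ⟨l, hl, h⟩
    · refine ⟨(s i).1, ?_⟩
      show (∑ l ∈ Finset.Ico i j, if (s l).1 = (s i).1 then (if (s l).2 then (1 : ℤ) else -1) else 0) ≠ 0
      rw [Finset.sum_eq_single_of_mem i (Finset.mem_Ico.mpr ⟨le_refl i, hij⟩)]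
      · rw [if_pos rfl]
        rcases Bool.eq_false_or_eq_true (s i).2 with hb | hb <;> simp [hb]
      · intro l hl hlne
        rw [if_neg]
        intro h
        exact hlne (once l i (Finset.mem_Ico.mp hl).2 hij h)

lemma exists_integral_of_den_one (N : Net V A) (b : V → ℤ) (g : A → ℚ)
    (hall : ∀ a, (g a).den = 1) (hg : QIsFlow N b g) :
    ∃ h : A → ℤ, IsFlow N b h ∧ (∀ a, (g a).den = 1 → (h a : ℚ) = g a) ∧
      (cost N h : ℚ) ≤ qcost N g := by
  have hnum : ∀ a, ((g a).num : ℚ) = g a := fun a => (Rat.den_eq_one_iff _).mp (hall a)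
  refine ⟨fun a => (g a).num, ⟨?_, ?_⟩, fun a _ => hnum a, ?_⟩
  · intro a
    obtain ⟨h2, h3⟩ := hg.1 a
    refine ⟨Rat.num_nonneg.mpr h2, ?_⟩
    have : ((g a).num : ℚ) ≤ (N.u a : ℚ) := by rw [hnum a]; exact h3
    exact_mod_cast this
  · intro v
    have hcast : ((excess N (fun a => (g a).num) v : ℤ) : ℚ) = qexcess N g v := by
      simp only [excess, qexcess]
      push_cast
      refine congrArg₂ (· - ·) ?_ ?_ <;>
        exact Finset.sum_congr rfl fun a _ => hnum a
    rw [hg.2 v] at hcast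
    exact_mod_cast hcast
  · have hc : ((cost N (fun a => (g a).num) : ℤ) : ℚ) = qcost N g := by
      simp only [cost, qcost]
      push_cast
      exact Finset.sum_congr rfl fun a _ => by rw [hnum a]
    exact le_of_eq hc

lemma exists_integral_round (N : Net V A) (b : V → ℤ) (n : ℕ) :
    ∀ g : A → ℚ, (univ.filter fun a => ¬ (g a).den = 1).card ≤ n → QIsFlow N b g →
      ∃ h : A → ℤ, IsFlow N b h ∧ (∀ a, (g a).den = 1 → (h a : ℚ) = g a) ∧
        (cost N h : ℚ) ≤ qcost N g := by
  classical
  induction n with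
  | zero =>
    intro g hcard hg
    refine exists_integral_of_den_one N b g (fun a => ?_) hg
    by_contra h
    have hmem : a ∈ univ.filter fun a => ¬ (g a).den = 1 := by simp [h]
    have := Finset.card_pos.mpr ⟨a, hmem⟩
    omega
  | succ n ih =>
    intro g hcard hg
    by_cases hF : (univ.filter fun a => ¬ (g a).den = 1).Nonempty
    swap
    · refine exists_integral_of_den_one N b g (fun a => ?_) hg
      by_contra h
      exact hF ⟨a, by simp [h]⟩
    set F := univ.filter fun a => ¬ (g a).den = 1 with hFdef
    have hmemF : ∀ a, a ∈ F ↔ ¬ (g a).den = 1 := by intro a; simp [hFdef]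
    have intsum : ∀ S : Finset A, (∀ x ∈ S, (g x).den = 1) →
        ∃ z : ℤ, ∑ x ∈ S, g x = (z : ℚ) := by
      intro S hS
      refine ⟨∑ x ∈ S, (g x).num, ?_⟩
      push_cast
      exact (Finset.sum_congr rfl fun x hx => (Rat.den_eq_one_iff _).mp (hS x hx)).symm
    have hdeg : ∀ a ∈ F, N.src a ≠ N.dst a → ∀ v : V, (N.src a = v ∨ N.dst a = v) →
        ∃ a', a' ∈ F ∧ a' ≠ a ∧ (N.src a' = v ∨ N.dst a' = v) := by
      intro a haF hnl v hinc
      by_contra hno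
      push_neg at hno
      have honly : ∀ x, x ≠ a → (N.src x = v ∨ N.dst x = v) → (g x).den = 1 := by
        intro x hx hxv
        by_contra hd
        have hxF : x ∈ F := (hmemF x).mpr hd
        obtain ⟨h1, h2⟩ := hno x hxF hx
        rcases hxv with h | h
        · exact h1 h
        · exact h2 h
      have hS1 : ∃ z : ℤ, ∑ x ∈ univ.filter (fun x => N.src x = v), g x
          = (if N.src a = v then g a else 0) + (z : ℚ) := by
        obtain ⟨z, hz⟩ := intsum ((univ.filter (fun x => N.src x = v)).erase a)
          (fun x hx => honly x (Finset.ne_of_mem_erase hx)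
            (Or.inl (Finset.mem_filter.mp (Finset.mem_of_mem_erase hx)).2))
        refine ⟨z, ?_⟩
        by_cases hav : N.src a = v
        · rw [if_pos hav, ← hz,
            ← Finset.add_sum_erase _ g (Finset.mem_filter.mpr ⟨Finset.mem_univ a, hav⟩)]
        · rw [if_neg hav, zero_add, ← hz,
            Finset.erase_eq_of_notMem (by simp [hav])]
      have hS2 : ∃ z : ℤ, ∑ x ∈ univ.filter (fun x => N.dst x = v), g x
          = (if N.dst a = v then g a else 0) + (z : ℚ) := by
        obtain ⟨z, hz⟩ := intsum ((univ.filter (fun x => N.dst x = v)).erase a)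
          (fun x hx => honly x (Finset.ne_of_mem_erase hx)
            (Or.inr (Finset.mem_filter.mp (Finset.mem_of_mem_erase hx)).2))
        refine ⟨z, ?_⟩
        by_cases hav : N.dst a = v
        · rw [if_pos hav, ← hz,
            ← Finset.add_sum_erase _ g (Finset.mem_filter.mpr ⟨Finset.mem_univ a, hav⟩)]
        · rw [if_neg hav, zero_add, ← hz,
            Finset.erase_eq_of_notMem (by simp [hav])]
      obtain ⟨z1, hz1⟩ := hS1
      obtain ⟨z2, hz2⟩ := hS2
      have hex := hg.2 v
      rw [qexcess, hz1, hz2] at hex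
      have hden : (g a).den = 1 := by
        rcases hinc with hsv | hdv
        · have hdv' : ¬ N.dst a = v := fun h => hnl (hsv.trans h.symm)
          rw [if_pos hsv, if_neg hdv'] at hex
          have : g a = ((b v - z1 + z2 : ℤ) : ℚ) := by push_cast; linarith
          rw [this]; exact Rat.den_intCast _
        · have hsv' : ¬ N.src a = v := fun h => hnl (h.trans hdv.symm)
          rw [if_pos hdv, if_neg hsv'] at hex
          have : g a = ((z1 - z2 - b v : ℤ) : ℚ) := by push_cast; linarith
          rw [this]; exact Rat.den_intCast _
      exact (hmemF a).mp haF hden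
    obtain ⟨σ, hσex, hσsupp, hσabs, a1, ha1⟩ := exists_circulation N F hF hdeg
    obtain ⟨τ, hτex, hτsupp, hτabs, hτne, hτcost⟩ :
        ∃ τ : A → ℤ, (∀ v, excess N τ v = 0) ∧ (∀ a, τ a ≠ 0 → a ∈ F) ∧
          (∀ a, |τ a| ≤ 1) ∧ (∃ a, τ a ≠ 0) ∧ (∑ a, N.c a * τ a) ≤ 0 := by
      rcases le_or_gt (∑ a, N.c a * σ a) 0 with h | h
      · exact ⟨σ, hσex, hσsupp, hσabs, ⟨a1, ha1⟩, h⟩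
      · refine ⟨fun a => -σ a, ?_, fun a ha => hσsupp a (fun h0 => ha (by simp [h0])),
          fun a => by simpa using hσabs a, ⟨a1, by simpa using ha1⟩, ?_⟩
        · intro v
          have h0 := hσex v
          simp only [excess, Finset.sum_neg_distrib] at *
          linarith
        · have : ∑ a, N.c a * -σ a = -∑ a, N.c a * σ a := by
            rw [← Finset.sum_neg_distrib]
            exact Finset.sum_congr rfl fun a _ => by ring
          rw [this]
          linarith
    set supp := univ.filter (fun a => τ a ≠ 0) with hsuppdef
    have hsne : supp.Nonempty := by
      obtain ⟨a2, ha2⟩ := hτne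
      exact ⟨a2, by simp [hsuppdef, ha2]⟩
    have hsuppF : ∀ a ∈ supp, a ∈ F := by
      intro a ha
      exact hτsupp a (by simpa [hsuppdef] using ha)
    set d : A → ℚ := fun a => if 0 < τ a then (⌈g a⌉ : ℚ) - g a else g a - (⌊g a⌋ : ℚ)
      with hddef
    have hfrac : ∀ a ∈ F, ((⌊g a⌋ : ℚ) < g a ∧ g a < (⌈g a⌉ : ℚ)) := by
      intro a haF
      have hdn := (hmemF a).mp haF
      constructor
      · rcases lt_or_eq_of_le (Int.floor_le (g a)) with h | h
        · exact h
        · exact absurd (by rw [← h]; exact Rat.den_intCast _) hdn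
      · rcases lt_or_eq_of_le (Int.le_ceil (g a)) with h | h
        · exact h
        · exact absurd (by rw [h]; exact Rat.den_intCast _) hdn
    have hpm : ∀ a ∈ supp, τ a = 1 ∨ τ a = -1 := by
      intro a ha
      have h1 := hτabs a
      have h2 : τ a ≠ 0 := by simpa [hsuppdef] using ha
      rw [abs_le] at h1
      omega
    have hdpos : ∀ a ∈ supp, 0 < d a := by
      intro a ha
      obtain ⟨hf1, hf2⟩ := hfrac a (hsuppF a ha)
      have hda : d a = if 0 < τ a then (⌈g a⌉ : ℚ) - g a else g a - (⌊g a⌋ : ℚ) := by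
        rw [hddef]
      rw [hda]
      by_cases h : 0 < τ a
      · rw [if_pos h]; linarith
      · rw [if_neg h]; linarith
    set t : ℚ := supp.inf' hsne d with htdef
    have htpos : 0 < t := by
      rw [htdef]
      rw [Finset.lt_inf'_iff]
      exact hdpos
    have htle : ∀ a ∈ supp, t ≤ d a := fun a ha => Finset.inf'_le d ha
    set g' : A → ℚ := fun a => g a + t * (τ a : ℚ) with hg'def
    have hg'eq : ∀ a, a ∉ supp → g' a = g a := by
      intro a ha
      have h0 : τ a = 0 := by
        by_contra h
        exact ha (by simp [hsuppdef, h])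
      simp [hg'def, h0]
    have hbounds : ∀ a, 0 ≤ g' a ∧ g' a ≤ (N.u a : ℚ) := by
      intro a
      by_cases hs : a ∈ supp
      · have hts := htle a hs
        obtain ⟨hf1, hf2⟩ := hfrac a (hsuppF a hs)
        obtain ⟨hg1, hg2⟩ := hg.1 a
        have hceil : (⌈g a⌉ : ℚ) ≤ (N.u a : ℚ) := by exact_mod_cast Int.ceil_le.mpr hg2
        have hfloor : (0 : ℚ) ≤ (⌊g a⌋ : ℚ) := by
          exact_mod_cast Int.le_floor.mpr (by exact_mod_cast hg1)
        rcases hpm a hs with h1 | h1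
        · have hda : d a = (⌈g a⌉ : ℚ) - g a := by norm_num [hddef, h1]
          have hval : g' a = g a + t := by norm_num [hg'def, h1]
          rw [hda] at hts
          constructor <;> rw [hval] <;> linarith
        · have hda : d a = g a - (⌊g a⌋ : ℚ) := by norm_num [hddef, h1]
          have hval : g' a = g a - t := by rw [hg'def]; push_cast [h1]; ring
          rw [hda] at hts
          constructor <;> rw [hval] <;> linarith
      · rw [hg'eq a hs]
        exact hg.1 a
    have hexg' : ∀ v, qexcess N g' v = (b v : ℚ) := by
      intro v
      have hlin : qexcess N g' v = qexcess N g v + t * ((excess N τ v : ℤ) : ℚ) := by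
        simp only [qexcess, excess, hg'def]
        push_cast
        rw [Finset.sum_add_distrib, Finset.sum_add_distrib, mul_sub,
          Finset.mul_sum, Finset.mul_sum]
        ring
      rw [hlin, hτex v, hg.2 v]
      push_cast
      ring
    have hcostg' : qcost N g' ≤ qcost N g := by
      have hlin : qcost N g' = qcost N g + t * ((∑ a, N.c a * τ a : ℤ) : ℚ) := by
        simp only [qcost, hg'def]
        push_cast
        rw [Finset.mul_sum, ← Finset.sum_add_distrib]
        exact Finset.sum_congr rfl fun a _ => by ring
      rw [hlin]
      have hnp : ((∑ a, N.c a * τ a : ℤ) : ℚ) ≤ 0 := by exact_mod_cast hτcost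
      nlinarith
    obtain ⟨astar, hastar, htval⟩ := Finset.exists_mem_eq_inf' hsne d
    have hg'astar : (g' astar).den = 1 := by
      rcases hpm astar hastar with h1 | h1
      · have hda : d astar = (⌈g astar⌉ : ℚ) - g astar := by norm_num [hddef, h1]
        have : g' astar = ((⌈g astar⌉ : ℤ) : ℚ) := by
          rw [hg'def]
          push_cast [h1]
          rw [htdef, htval, hda]
          ring
        rw [this]
        exact Rat.den_intCast _
      · have hda : d astar = g astar - ((⌊g astar⌋ : ℤ) : ℚ) := by norm_num [hddef, h1]
        have : g' astar = ((⌊g astar⌋ : ℤ) : ℚ) := by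
          rw [hg'def]
          push_cast [h1]
          rw [htdef, htval, hda]
          ring
        rw [this]
        exact Rat.den_intCast _
    have hsub : (univ.filter fun a => ¬ (g' a).den = 1) ⊆ F.erase astar := by
      intro a ha
      rw [Finset.mem_filter] at ha
      rw [Finset.mem_erase]
      constructor
      · intro h
        exact ha.2 (h ▸ hg'astar)
      · by_contra haF
        have h0 : τ a = 0 := by
          by_contra h
          exact haF (hτsupp a h)
        have he : g' a = g a := by simp [hg'def, h0]
        have hden : (g a).den = 1 := by
          by_contra h
          exact haF ((hmemF a).mpr h)
        exact ha.2 (by rw [he]; exact hden)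
    have hcard' : (univ.filter fun a => ¬ (g' a).den = 1).card ≤ n := by
      have h1 := Finset.card_le_card hsub
      have h2 : (F.erase astar).card = F.card - 1 :=
        Finset.card_erase_of_mem (hsuppF astar hastar)
      have h3 : 0 < F.card := Finset.card_pos.mpr ⟨astar, hsuppF astar hastar⟩
      omega
    obtain ⟨h, hflow, hagree, hcost⟩ := ih g' hcard' ⟨hbounds, hexg'⟩
    refine ⟨h, hflow, ?_, le_trans hcost hcostg'⟩
    intro a hden
    have haF : a ∉ supp := by
      intro hs
      exact (hmemF a).mp (hsuppF a hs) hden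
    have he : g' a = g a := hg'eq a haF
    rw [← he]
    exact hagree a (by rw [he]; exact hden)

/-- Corollary 2 of the paper: for a feasible instance with a (constant
sized) set of fixed arcs, the problem reduces to choosing an integral load on the fixed
arcs with fractional per-scenario subproblems: there is an optimal integral robust
`b`-flow `f` such that (i) `f` beats every fractional robust flow whose fixed-arc
values form an integral load vector (so the load of `f` is an optimal solution of the
mixed-integer program whose only integer variables are the `k` loads, each scenario
subproblem being a fractional min-cost flow), and (ii) each scenario flow of `f` is a
minimum-cost integral flow among integral flows having the same fixed-arc load, i.e.
`f` is recovered from its optimal load by `|Λ|` independent integral min-cost flow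
computations. -/
theorem constant_fixed_arcs_mip_reduction {Λ : Type} [Fintype Λ] [Nonempty Λ]
    (N : Net V A) (b : Λ → V → ℤ) (hu : ∀ a, 0 ≤ N.u a)
    (k : ℕ) (hk : Fintype.card {a : A // N.isFixed a = true} = k)
    (hfeas : ∃ f : Λ → A → ℤ, IsRobust N b f) :
    ∃ f : Λ → A → ℤ, IsRobust N b f ∧
      (∀ g : Λ → A → ℤ, IsRobust N b g → robustCost N f ≤ robustCost N g) ∧
      (∀ (ℓ : A → ℤ) (g : Λ → A → ℚ),
        (∀ lam, QIsFlow N (b lam) (g lam)) →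
        (∀ lam lam' a, N.isFixed a = true → g lam a = g lam' a) →
        (∀ lam a, N.isFixed a = true → g lam a = (ℓ a : ℚ)) →
        (robustCost N f : ℚ) ≤ qRobustCost N g) ∧
      (∀ lam (h : A → ℤ), IsFlow N (b lam) h →
        (∀ a, N.isFixed a = true → h a = f lam a) →
        cost N (f lam) ≤ cost N h) := by

  classical
  obtain ⟨f0, hf0⟩ := hfeas
  have hcostlb : ∀ h : A → ℤ, (∀ a, 0 ≤ h a ∧ h a ≤ N.u a) →
      (∑ a, -(|N.c a| * N.u a)) ≤ cost N h := by
    intro h hh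
    refine Finset.sum_le_sum fun a _ => ?_
    obtain ⟨h1, h2⟩ := hh a
    have habs : |N.c a * h a| ≤ |N.c a| * N.u a := by
      rw [abs_mul]
      exact mul_le_mul_of_nonneg_left (by rw [abs_of_nonneg h1]; exact h2) (abs_nonneg _)
    have := neg_abs_le (N.c a * h a)
    linarith
  have hrb : ∀ f : Λ → A → ℤ, IsRobust N b f →
      (∑ a, -(|N.c a| * N.u a)) ≤ robustCost N f := by
    intro f hf
    have lam0 : Λ := Classical.arbitrary Λ
    have hs : cost N (f lam0) ≤ robustCost N f := by
      unfold robustCost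
      exact Finset.le_sup' (fun lam => cost N (f lam)) (Finset.mem_univ lam0)
    exact le_trans (hcostlb (f lam0) fun a => (hf.1 lam0).1 a) hs
  obtain ⟨m, ⟨f1, hf1, hf1m⟩, hmle⟩ := Int.exists_least_of_bdd
    (P := fun z => ∃ f : Λ → A → ℤ, IsRobust N b f ∧ robustCost N f = z)
    ⟨∑ a, -(|N.c a| * N.u a), fun z hz => by obtain ⟨f, hfr, rfl⟩ := hz; exact hrb f hfr⟩
    ⟨robustCost N f0, f0, hf0, rfl⟩
  have hper : ∀ lam : Λ, ∃ h : A → ℤ,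
      (IsFlow N (b lam) h ∧ ∀ a, N.isFixed a = true → h a = f1 lam a) ∧
      ∀ h' : A → ℤ, IsFlow N (b lam) h' → (∀ a, N.isFixed a = true → h' a = f1 lam a) →
        cost N h ≤ cost N h' := by
    intro lam
    obtain ⟨m', ⟨h, hh, hhm⟩, hm'le⟩ := Int.exists_least_of_bdd
      (P := fun z => ∃ h : A → ℤ,
        (IsFlow N (b lam) h ∧ ∀ a, N.isFixed a = true → h a = f1 lam a) ∧ cost N h = z)
      ⟨∑ a, -(|N.c a| * N.u a), fun z hz => by
        obtain ⟨h, hh, rfl⟩ := hz; exact hcostlb h fun a => hh.1.1 a⟩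
      ⟨cost N (f1 lam), f1 lam, ⟨hf1.1 lam, fun a _ => rfl⟩, rfl⟩
    exact ⟨h, hh, fun h' h1 h2 => hhm ▸ hm'le (cost N h') ⟨h', ⟨h1, h2⟩, rfl⟩⟩
  choose f hfspec using hper
  have hffix : ∀ lam a, N.isFixed a = true → f lam a = f1 lam a := fun lam a ha =>
    (hfspec lam).1.2 a ha
  have hrob : IsRobust N b f := by
    refine ⟨fun lam => (hfspec lam).1.1, fun lam lam' a ha => ?_⟩
    rw [hffix lam a ha, hffix lam' a ha, hf1.2 lam lam' a ha]
  have hle1 : robustCost N f ≤ m := by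
    rw [← hf1m]
    unfold robustCost
    refine Finset.sup'_le _ _ fun lam _ => ?_
    refine le_trans ?_ (Finset.le_sup' (fun lam => cost N (f1 lam)) (Finset.mem_univ lam))
    exact (hfspec lam).2 (f1 lam) (hf1.1 lam) fun a _ => rfl
  refine ⟨f, hrob, ?_, ?_, ?_⟩
  · intro g hg
    exact le_trans hle1 (hmle _ ⟨g, hg, rfl⟩)
  · intro ℓ g hgflow hgrob hgload
    have hroundall : ∀ lam : Λ, ∃ h : A → ℤ, IsFlow N (b lam) h ∧
        (∀ a, (g lam a).den = 1 → (h a : ℚ) = g lam a) ∧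
        (cost N h : ℚ) ≤ qcost N (g lam) := fun lam =>
      exists_integral_round N (b lam) (Fintype.card A) (g lam)
        (le_trans (Finset.card_filter_le _ _) (le_of_eq Finset.card_univ))
        (hgflow lam)
    choose H Hspec using hroundall
    have hHfix : ∀ lam a, N.isFixed a = true → H lam a = ℓ a := by
      intro lam a ha
      have hden : (g lam a).den = 1 := by rw [hgload lam a ha]; exact Rat.den_intCast _
      have hc := (Hspec lam).2.1 a hden
      rw [hgload lam a ha] at hc
      exact_mod_cast hc
    have hHrob : IsRobust N b H := by
      refine ⟨fun lam => (Hspec lam).1, fun lam lam' a ha => ?_⟩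
      rw [hHfix lam a ha, hHfix lam' a ha]
    have h2 : robustCost N f ≤ robustCost N H := le_trans hle1 (hmle _ ⟨H, hHrob, rfl⟩)
    obtain ⟨lams, _, heq⟩ := Finset.exists_mem_eq_sup' (univ_nonempty (α := Λ))
      fun lam => cost N (H lam)
    have h3 : (robustCost N H : ℚ) ≤ qRobustCost N g := by
      unfold robustCost
      rw [heq]
      have hq : qcost N (g lams) ≤ qRobustCost N g := by
        unfold qRobustCost
        exact Finset.le_sup' (fun lam => qcost N (g lam)) (Finset.mem_univ lams)
      exact le_trans (by exact_mod_cast (Hspec lams).2.2) hq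
    calc ((robustCost N f : ℤ) : ℚ) ≤ ((robustCost N H : ℤ) : ℚ) := by exact_mod_cast h2
      _ ≤ qRobustCost N g := h3
  · intro lam h hflow hmatch
    exact (hfspec lam).2 h hflow fun a ha => (hmatch a ha).trans (hffix lam a ha)
end
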